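/- arXiv:2604.24664 — 4 statements merged into one kernel-verified Lean document; each statement's English description precedes it below -/
import Mathlib

section
/- For α ∈ (0, 1/2) and all u, v ∈ (0, ∞) with u ≠ v, one has (uv)^α / B(1−2α, α) · ∫_0^{u∧v} y^{−2α} (u−y)^{α−1} (v−y)^{α−1} dy = |u−v|^{2α−1}, where B denotes the Beta function. -/
open MeasureTheory Set Real
open scoped ENNReal

/-!
The Möbius substitution `y = u v s / (v - u + u s)` maps `(0, 1)` onto `(0, u)` when `0 < u < v`,
with `u - y`, `v - y` and `dy/ds` all explicit multiples of powers of `D = v - u + u s`.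
In `∫₀ᵘ y^(a-1) (u-y)^(b-1) (v-y)^(-(a+b)) dy` the powers of `D` then cancel, leaving
`u^(a+b-1) v^(-b) (v-u)^(-a) B(a, b)`. For `a = 1 - 2α`, `b = α` the prefactor is
`(uv)^(-α) (v-u)^(2α-1)`, and `u > v` follows by symmetry.
-/

noncomputable def betaFn (a b : ℝ) : ℝ :=
  ∫ t in Ioc (0:ℝ) 1, t ^ (a - 1) * (1 - t) ^ (b - 1)

/-- The integrand after the substitution, with `w = v - u`, `t = 1 - s`, `D = v - u + u s`. -/
lemma betaSubst_integrand_eq {u v w s t D : ℝ} (hu : 0 < u) (hv : 0 < v) (hw : 0 < w) (hs : 0 < s)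
    (ht : 0 < t) (hD : 0 < D) (a b : ℝ) :
    u * v * w / D ^ 2 * ((u * v * s / D) ^ (a - 1) * (u * w * t / D) ^ (b - 1) *
      (v * w / D) ^ (-(a + b)))
      = u ^ (a + b - 1) * v ^ (-b) * w ^ (-a) * (s ^ (a - 1) * t ^ (b - 1)) := by
  obtain ⟨p, rfl⟩ : ∃ p, exp p = u := ⟨_, exp_log hu⟩
  obtain ⟨q, rfl⟩ : ∃ q, exp q = v := ⟨_, exp_log hv⟩
  obtain ⟨r, rfl⟩ : ∃ r, exp r = w := ⟨_, exp_log hw⟩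
  obtain ⟨σ, rfl⟩ : ∃ σ, exp σ = s := ⟨_, exp_log hs⟩
  obtain ⟨τ, rfl⟩ : ∃ τ, exp τ = t := ⟨_, exp_log ht⟩
  obtain ⟨δ, rfl⟩ : ∃ δ, exp δ = D := ⟨_, exp_log hD⟩
  simp only [← exp_add, ← exp_sub, ← exp_nat_mul, ← exp_mul]
  congr 1
  push_cast
  ring

section BetaSubst

variable {u v : ℝ}

noncomputable def betaSubst (u v s : ℝ) : ℝ := u * v * s / (v - u + u * s)

lemma betaSubst_denom_pos (hu : 0 < u) (huv : u ≤ v) {s : ℝ} (hs : 0 < s) :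
    0 < v - u + u * s := by
  nlinarith

lemma hasDerivAt_betaSubst {s : ℝ} (hD : v - u + u * s ≠ 0) :
    HasDerivAt (betaSubst u v) (u * v * (v - u) / (v - u + u * s) ^ 2) s :=
  (((hasDerivAt_id s).const_mul (u * v)).div
    (((hasDerivAt_id s).const_mul u).const_add (v - u)) hD).congr_deriv
    (by simp only [id, mul_one]; ring)

lemma sub_betaSubst_left {s : ℝ} (hD : v - u + u * s ≠ 0) :
    u - betaSubst u v s = u * (v - u) * (1 - s) / (v - u + u * s) := by
  rw [betaSubst]
  field_simp
  ring

lemma sub_betaSubst_right {s : ℝ} (hD : v - u + u * s ≠ 0) :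
    v - betaSubst u v s = v * (v - u) / (v - u + u * s) := by
  rw [betaSubst]
  field_simp
  ring

lemma bijOn_betaSubst (hu : 0 < u) (huv : u < v) :
    BijOn (betaSubst u v) (Ioo 0 1) (Ioo 0 u) := by
  have hv : 0 < v := hu.trans huv
  have hvu : 0 < v - u := sub_pos.mpr huv
  refine InvOn.bijOn (f' := fun y => y * (v - u) / (u * (v - y)))
    ⟨fun s hs => ?_, fun y hy => ?_⟩ (fun s hs => ?_) (fun y hy => ?_)
  · have hD := betaSubst_denom_pos hu huv.le hs.1
    dsimp only
    rw [sub_betaSubst_right hD.ne', betaSubst]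
    field_simp
  · have : 0 < v - y := by linarith [hy.2]
    have hden : v - u + u * (y * (v - u) / (u * (v - y))) = v * (v - u) / (v - y) := by
      field_simp
      ring
    rw [betaSubst, hden]
    field_simp
  · have hD := betaSubst_denom_pos hu huv.le hs.1
    refine ⟨div_pos (by have := hs.1; positivity) hD, ?_⟩
    rw [betaSubst, div_lt_iff₀ hD]
    nlinarith [mul_pos (mul_pos hu hvu) (sub_pos.mpr hs.2)]
  · have : 0 < v - y := by linarith [hy.2]
    refine ⟨by have := hy.1; positivity, ?_⟩
    rw [div_lt_one (by positivity)]
    nlinarith [hy.2]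

end BetaSubst

theorem integral_Ioc_eq_mul_betaFn {u v : ℝ} (hu : 0 < u) (huv : u < v) (a b : ℝ) :
    ∫ y in Ioc 0 u, y ^ (a - 1) * (u - y) ^ (b - 1) * (v - y) ^ (-(a + b))
      = u ^ (a + b - 1) * v ^ (-b) * (v - u) ^ (-a) * betaFn a b := by
  have hbij := bijOn_betaSubst hu huv
  rw [integral_Ioc_eq_integral_Ioo, ← hbij.image_eq,
    integral_image_eq_integral_abs_deriv_smul measurableSet_Ioo (fun s hs =>
      (hasDerivAt_betaSubst (betaSubst_denom_pos hu huv.le hs.1).ne').hasDerivWithinAt)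
      hbij.injOn,
    betaFn, integral_Ioc_eq_integral_Ioo, ← integral_const_mul]
  refine setIntegral_congr_fun measurableSet_Ioo fun s ⟨hs0, hs1⟩ => ?_
  have hD := betaSubst_denom_pos hu huv.le hs0
  have hv : 0 < v := hu.trans huv
  have hvu : 0 < v - u := sub_pos.mpr huv
  rw [smul_eq_mul, sub_betaSubst_left hD.ne', sub_betaSubst_right hD.ne',
    abs_of_pos (by positivity), betaSubst]
  exact betaSubst_integrand_eq hu hv hvu hs0 (sub_pos.mpr hs1) hD a b

lemma integrableOn_betaFn_integrand {a b : ℝ} (ha : 0 < a) (hb : 0 < b) :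
    IntegrableOn (fun t : ℝ => t ^ (a - 1) * (1 - t) ^ (b - 1)) (Ioo 0 1) := by
  have h := (Complex.betaIntegral_convergent (u := (a : ℂ)) (v := (b : ℂ))
    (by simpa using ha) (by simpa using hb)).norm
  rw [intervalIntegrable_iff_integrableOn_Ioo_of_le zero_le_one] at h
  refine h.congr_fun (fun t ⟨ht0, ht1⟩ => ?_) measurableSet_Ioo
  have h1t : (0 : ℝ) < 1 - t := sub_pos.mpr ht1
  beta_reduce
  rw [norm_mul, show 1 - (t : ℂ) = ((1 - t : ℝ) : ℂ) by push_cast; ring,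
    Complex.norm_cpow_eq_rpow_re_of_pos ht0, Complex.norm_cpow_eq_rpow_re_of_pos h1t]
  simp

lemma betaFn_pos {a b : ℝ} (ha : 0 < a) (hb : 0 < b) : 0 < betaFn a b := by
  rw [betaFn, ← intervalIntegral.integral_of_le zero_le_one]
  refine intervalIntegral.intervalIntegral_pos_of_pos_on ?_ (fun t ⟨ht0, ht1⟩ => ?_) zero_lt_one
  · rw [intervalIntegrable_iff_integrableOn_Ioo_of_le zero_le_one]
    exact integrableOn_betaFn_integrand ha hb
  · have := sub_pos.mpr ht1
    positivity

/-- the key Beta-function integral identity. -/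
theorem stmt2 (α : ℝ) (hα : α ∈ Ioo (0:ℝ) (1/2)) (u v : ℝ) (hu : 0 < u) (hv : 0 < v)
    (huv : u ≠ v) :
    (u * v) ^ α / betaFn (1 - 2 * α) α *
      ∫ y in Ioc (0:ℝ) (min u v), y ^ (-(2 * α)) * (u - y) ^ (α - 1) * (v - y) ^ (α - 1)
      = |u - v| ^ (2 * α - 1) := by
  wlog h : u < v generalizing u v
  · have hswap (y : ℝ) : y ^ (-(2 * α)) * (u - y) ^ (α - 1) * (v - y) ^ (α - 1)
        = y ^ (-(2 * α)) * (v - y) ^ (α - 1) * (u - y) ^ (α - 1) := mul_right_comm _ _ _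
    rw [mul_comm u, min_comm, abs_sub_comm]
    simp only [hswap]
    exact this v u hv hu huv.symm (huv.symm.lt_of_le (not_lt.mp h))
  have hB : 0 < betaFn (1 - 2 * α) α := betaFn_pos (by linarith [hα.2]) hα.1
  have key := integral_Ioc_eq_mul_betaFn hu h (1 - 2 * α) α
  rw [show 1 - 2 * α - 1 = -(2 * α) by ring, show -(1 - 2 * α + α) = α - 1 by ring,
    show 1 - 2 * α + α - 1 = -α by ring, show -(1 - 2 * α) = 2 * α - 1 by ring] at key
  rw [min_eq_left h.le, key, abs_sub_comm, abs_of_pos (sub_pos.mpr h), mul_rpow hu.le hv.le,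
    rpow_neg hu.le, rpow_neg hv.le]
  have := (rpow_pos_of_pos hu α).ne'
  have := (rpow_pos_of_pos hv α).ne'
  field_simp
end

section
/- Let H ∈ (1/2, 1). For every t ∈ [0,T], the Rosenblatt kernel K^H_t(y₁, y₂) = e_H · 1_{[0,t]²}(y₁,y₂) · (y₁ y₂)^{−H/2} ∫_{y₁∨y₂}^t u^H (u−y₁)^{H/2−1}(u−y₂)^{H/2−1} du belongs to L²([0,T]²). -/
open MeasureTheory Set Real
open scoped ENNReal

/-- The Rosenblatt kernel `K^H_t`. -/
noncomputable def rosenblattKernel (H eH t : ℝ) (y₁ y₂ : ℝ) : ℝ :=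
  (Icc (0:ℝ) t ×ˢ Icc (0:ℝ) t).indicator
    (fun p : ℝ × ℝ =>
      eH * (p.1 * p.2) ^ (-(H / 2)) *
        ∫ u in Ioc (max p.1 p.2) t, u ^ H * (u - p.1) ^ (H / 2 - 1) * (u - p.2) ^ (H / 2 - 1))
    (y₁, y₂)

/-!
For `0 < y₁ < y₂ < u`, subadditivity `u^H ≤ (u - y₂)^H + y₂^H` together with
`(u - y₁)^(H/2-1) ≤ (u - y₂)^(-1/4) (y₂ - y₁)^(H/2-3/4)` bounds the inner integral by
`C (1 + y₂^H (y₂ - y₁)^(H/2-3/4))`, hence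
`|K^H_t(y₁, y₂)| ≤ C ((y₁ y₂)^(-H/2) + y₁^(-H/2) y₂^(H/2) (y₂ - y₁)^(H/2-3/4))`.
Distinguishing `y₂ ≤ 2 y₁` from `y₂ > 2 y₁`, the last term is at most a multiple of
`y₁^(-H/2) y₂^(H-3/4) + |y₁ - y₂|^(H/2-3/4)`. Since `1/2 < H < 1`, every term of the resulting
symmetric majorant is square integrable on `[0,T]²`: the products of powers by Fubini, and the
function of `y₁ - y₂` because it is a convolution integrand of two integrable functions.
-/

lemma intervalIntegrable_abs_rpow {s : ℝ} (hs : -1 < s) (a b : ℝ) :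
    IntervalIntegrable (fun x => |x| ^ s) volume a b := by
  have hpos : ∀ c, 0 ≤ c → IntervalIntegrable (fun x => |x| ^ s) volume 0 c := fun c hc =>
    (intervalIntegral.intervalIntegrable_rpow' hs).congr fun x hx => by
      rw [uIoc_of_le hc] at hx
      simp [abs_of_pos hx.1]
  have hzero : ∀ c, IntervalIntegrable (fun x => |x| ^ s) volume 0 c := by
    intro c
    rcases le_total 0 c with hc | hc
    · exact hpos c hc
    · rw [IntervalIntegrable.iff_comp_neg, neg_zero]
      simpa only [abs_neg] using hpos (-c) (by linarith)
  exact (hzero a).symm.trans (hzero b)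

lemma integrableOn_sub_rpow_Ioc {r : ℝ} (hr : -1 < r) (a b : ℝ) :
    IntegrableOn (fun u => (u - a) ^ r) (Ioc a b) := by
  rcases le_total a b with hab | hab
  · rw [← intervalIntegrable_iff_integrableOn_Ioc_of_le hab]
    simpa using
      (intervalIntegral.intervalIntegrable_rpow' hr (a := 0) (b := b - a)).comp_sub_right a
  · simp [Ioc_eq_empty_of_le hab]

lemma setIntegral_sub_rpow_Ioc_le {r a b : ℝ} (hr : -1 < r) (ha : 0 ≤ a) (hab : a ≤ b) :
    ∫ u in Ioc a b, (u - a) ^ r ≤ b ^ (r + 1) / (r + 1) := by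
  rw [← intervalIntegral.integral_of_le hab,
    intervalIntegral.integral_comp_sub_right (fun x => x ^ r), sub_self,
    integral_rpow (Or.inl hr), zero_rpow (by linarith), sub_zero]
  gcongr <;> linarith

lemma memLp_two_rpow_Icc {s : ℝ} (hs : -1 / 2 < s) (T : ℝ) :
    MemLp (fun x : ℝ => x ^ s) 2 (volume.restrict (Icc 0 T)) := by
  rw [memLp_two_iff_integrable_sq (by fun_prop)]
  have hint : IntegrableOn (fun x : ℝ => x ^ (2 * s)) (Icc 0 T) :=
    ((intervalIntegrable_iff').1 (intervalIntegral.intervalIntegrable_rpow' (by linarith))).mono_set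
      Icc_subset_uIcc
  refine hint.congr_fun (fun x hx => ?_) measurableSet_Icc
  simp only [mul_comm (2 : ℝ) s, rpow_mul hx.1, rpow_two]

lemma integrable_abs_sub_rpow {s : ℝ} (hs : -1 < s) (a b : ℝ) :
    Integrable (fun p : ℝ × ℝ => |p.1 - p.2| ^ s)
      ((volume.restrict (Icc a b)).prod (volume.restrict (Icc a b))) := by
  have hg : Integrable ((uIcc (a - b) (b - a)).indicator fun x => |x| ^ s) := by
    rw [integrable_indicator_iff measurableSet_uIcc, ← intervalIntegrable_iff']
    exact intervalIntegrable_abs_rpow hs _ _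
  have hf : Integrable ((Icc a b).indicator fun _ => (1 : ℝ)) := by
    rw [integrable_indicator_iff measurableSet_Icc]
    exact integrableOn_const measure_Icc_lt_top.ne
  have hconv := (hf.convolution_integrand (ContinuousLinearMap.mul ℝ ℝ) hg).restrict
    (s := Icc a b ×ˢ Icc a b)
  rw [← Measure.prod_restrict] at hconv
  refine hconv.congr ?_
  rw [Measure.prod_restrict]
  filter_upwards [ae_restrict_mem (measurableSet_Icc.prod measurableSet_Icc)] with p ⟨hp₁, hp₂⟩
  have hdiff : p.1 - p.2 ∈ uIcc (a - b) (b - a) :=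
    Icc_subset_uIcc ⟨by linarith [hp₁.1, hp₂.2], by linarith [hp₁.2, hp₂.1]⟩
  simp [indicator_of_mem hp₂, indicator_of_mem hdiff]

lemma memLp_two_abs_sub_rpow {s : ℝ} (hs : -1 / 2 < s) (a b : ℝ) :
    MemLp (fun p : ℝ × ℝ => |p.1 - p.2| ^ s) 2
      ((volume.restrict (Icc a b)).prod (volume.restrict (Icc a b))) := by
  have hmeas : Measurable fun p : ℝ × ℝ => |p.1 - p.2| ^ s := by fun_prop
  rw [memLp_two_iff_integrable_sq hmeas.aestronglyMeasurable]
  refine (integrable_abs_sub_rpow (s := 2 * s) (by linarith) a b).congr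
    (ae_of_all _ fun p => ?_)
  simp only [mul_comm (2 : ℝ) s, rpow_mul (abs_nonneg _), rpow_two]

lemma MeasureTheory.MemLp.two_mul_prod {α β : Type*} [MeasurableSpace α] [MeasurableSpace β]
    {μ : Measure α} {ν : Measure β} [SFinite ν] {f : α → ℝ} {g : β → ℝ}
    (hf : MemLp f 2 μ) (hg : MemLp g 2 ν) :
    MemLp (fun p : α × β => f p.1 * g p.2) 2 (μ.prod ν) := by
  have hmeas : AEStronglyMeasurable (fun p : α × β => f p.1 * g p.2) (μ.prod ν) :=
    hf.1.comp_fst.mul hg.1.comp_snd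
  rw [memLp_two_iff_integrable_sq hmeas]
  simpa only [mul_pow] using
    ((memLp_two_iff_integrable_sq hf.1).1 hf).mul_prod ((memLp_two_iff_integrable_sq hg.1).1 hg)

noncomputable def rosenblattIntegrand (H y₁ y₂ u : ℝ) : ℝ :=
  u ^ H * (u - y₁) ^ (H / 2 - 1) * (u - y₂) ^ (H / 2 - 1)

lemma rosenblattIntegrand_nonneg {H y₁ y₂ u : ℝ} (hy₁ : 0 ≤ y₁) (h₁ : y₁ ≤ u) (h₂ : y₂ ≤ u) :
    0 ≤ rosenblattIntegrand H y₁ y₂ u := by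
  have : 0 ≤ u - y₁ := sub_nonneg.2 h₁
  have : 0 ≤ u - y₂ := sub_nonneg.2 h₂
  have : 0 ≤ u := hy₁.trans h₁
  unfold rosenblattIntegrand
  positivity

lemma rosenblattIntegrand_le {H y₁ y₂ u : ℝ} (hH₀ : 0 ≤ H) (hH₁ : H ≤ 1)
    (hy₁ : 0 < y₁) (hy : y₁ < y₂) (hu : y₂ < u) :
    rosenblattIntegrand H y₁ y₂ u ≤
      (u - y₂) ^ (2 * H - 2) +
        y₂ ^ H * (y₂ - y₁) ^ (H / 2 - 3 / 4) * (u - y₂) ^ (H / 2 - 5 / 4) := by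
  have hv : 0 < u - y₂ := by linarith
  have hw : 0 < u - y₁ := by linarith
  have hd : 0 < y₂ - y₁ := by linarith
  have hsub : u ^ H ≤ (u - y₂) ^ H + y₂ ^ H := by
    simpa using rpow_add_le_add_rpow hv.le (hy₁.trans hy).le hH₀ hH₁
  have hfar : (u - y₁) ^ (H / 2 - 1) ≤ (u - y₂) ^ (H / 2 - 1) :=
    rpow_le_rpow_of_nonpos hv (by linarith) (by linarith)
  -- `H/2 - 1 = -1/4 + (H/2 - 3/4)`: for `H > 1/2` this makes `(u - y₂)^(H/2-5/4)` integrable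
  -- and `(y₂ - y₁)^(H/2-3/4)` square integrable
  have hnear : (u - y₁) ^ (H / 2 - 1) ≤ (u - y₂) ^ (-1 / 4 : ℝ) * (y₂ - y₁) ^ (H / 2 - 3 / 4) := by
    rw [show H / 2 - 1 = -1 / 4 + (H / 2 - 3 / 4) by ring, rpow_add hw]
    gcongr ?_ * ?_
    · exact rpow_le_rpow_of_nonpos hv (by linarith) (by norm_num)
    · exact rpow_le_rpow_of_nonpos hd (by linarith) (by linarith)
  have hpow₁ : (u - y₂) ^ H * (u - y₂) ^ (H / 2 - 1) * (u - y₂) ^ (H / 2 - 1)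
      = (u - y₂) ^ (2 * H - 2) := by
    rw [← rpow_add hv, ← rpow_add hv]; ring_nf
  have hpow₂ : (u - y₂) ^ (H / 2 - 5 / 4) = (u - y₂) ^ (-1 / 4 : ℝ) * (u - y₂) ^ (H / 2 - 1) := by
    rw [← rpow_add hv]; ring_nf
  calc rosenblattIntegrand H y₁ y₂ u
      ≤ (u - y₂) ^ H * (u - y₁) ^ (H / 2 - 1) * (u - y₂) ^ (H / 2 - 1)
        + y₂ ^ H * (u - y₁) ^ (H / 2 - 1) * (u - y₂) ^ (H / 2 - 1) := by
        rw [rosenblattIntegrand, ← add_mul, ← add_mul]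
        gcongr
    _ ≤ (u - y₂) ^ H * (u - y₂) ^ (H / 2 - 1) * (u - y₂) ^ (H / 2 - 1)
        + y₂ ^ H * ((u - y₂) ^ (-1 / 4 : ℝ) * (y₂ - y₁) ^ (H / 2 - 3 / 4))
          * (u - y₂) ^ (H / 2 - 1) := by
        gcongr
        exact rpow_nonneg (hy₁.trans hy).le _
    _ = _ := by rw [hpow₁, hpow₂]; ring

lemma setIntegral_rosenblattIntegrand_le {H y₁ y₂ t : ℝ} (hH : H ∈ Ioo (1 / 2) 1)
    (hy₁ : 0 < y₁) (hy : y₁ < y₂) (ht : y₂ ≤ t) :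
    ∫ u in Ioc y₂ t, rosenblattIntegrand H y₁ y₂ u ≤
      t ^ (2 * H - 1) / (2 * H - 1) +
        y₂ ^ H * (y₂ - y₁) ^ (H / 2 - 3 / 4) * (t ^ (H / 2 - 1 / 4) / (H / 2 - 1 / 4)) := by
  obtain ⟨hH₀, hH₁⟩ := hH
  have hy₂ : 0 < y₂ := hy₁.trans hy
  have hint₁ := integrableOn_sub_rpow_Ioc (r := 2 * H - 2) (by linarith) y₂ t
  have hint₂ := integrableOn_sub_rpow_Ioc (r := H / 2 - 5 / 4) (by linarith) y₂ t
  have h₁ := setIntegral_sub_rpow_Ioc_le (r := 2 * H - 2) (by linarith) hy₂.le ht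
  have h₂ := setIntegral_sub_rpow_Ioc_le (r := H / 2 - 5 / 4) (by linarith) hy₂.le ht
  rw [show 2 * H - 2 + 1 = 2 * H - 1 by ring] at h₁
  rw [show H / 2 - 5 / 4 + 1 = H / 2 - 1 / 4 by ring] at h₂
  have hd : 0 < y₂ - y₁ := sub_pos.2 hy
  calc ∫ u in Ioc y₂ t, rosenblattIntegrand H y₁ y₂ u
      ≤ ∫ u in Ioc y₂ t, ((u - y₂) ^ (2 * H - 2)
          + y₂ ^ H * (y₂ - y₁) ^ (H / 2 - 3 / 4) * (u - y₂) ^ (H / 2 - 5 / 4)) := by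
        refine integral_mono_of_nonneg ?_ (hint₁.add (hint₂.const_mul _)) ?_
        all_goals filter_upwards [ae_restrict_mem measurableSet_Ioc] with u hu
        · exact rosenblattIntegrand_nonneg hy₁.le (hy.trans hu.1).le hu.1.le
        · exact rosenblattIntegrand_le (by linarith) hH₁.le hy₁ hy hu.1
    _ = (∫ u in Ioc y₂ t, (u - y₂) ^ (2 * H - 2))
          + y₂ ^ H * (y₂ - y₁) ^ (H / 2 - 3 / 4) * ∫ u in Ioc y₂ t, (u - y₂) ^ (H / 2 - 5 / 4) := by
        rw [integral_add hint₁ (hint₂.const_mul _), integral_const_mul]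
    _ ≤ _ := by gcongr

lemma rosenblattKernel_comm (H eH t x y : ℝ) :
    rosenblattKernel H eH t x y = rosenblattKernel H eH t y x := by
  simp only [rosenblattKernel, indicator, mem_prod, and_comm (a := x ∈ Icc 0 t), max_comm x y,
    mul_comm x y]
  congr 3
  ext u
  ring

lemma abs_rosenblattKernel_le_of_lt {H eH t x y : ℝ} (hH : H ∈ Ioo (1 / 2) 1) (ht : 0 ≤ t)
    (hx : 0 < x) (hxy : x < y) :
    |rosenblattKernel H eH t x y| ≤
      |eH| * (t ^ (2 * H - 1) / (2 * H - 1) * (x ^ (-(H / 2)) * y ^ (-(H / 2)))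
        + t ^ (H / 2 - 1 / 4) / (H / 2 - 1 / 4) *
          (x ^ (-(H / 2)) * y ^ (H / 2) * (y - x) ^ (H / 2 - 3 / 4))) := by
  have hy : 0 < y := hx.trans hxy
  by_cases hyt : y ≤ t
  · have hmem : (x, y) ∈ Icc (0 : ℝ) t ×ˢ Icc 0 t := ⟨⟨hx.le, hxy.le.trans hyt⟩, ⟨hy.le, hyt⟩⟩
    have hI₀ : 0 ≤ ∫ u in Ioc y t, rosenblattIntegrand H x y u :=
      setIntegral_nonneg measurableSet_Ioc fun u hu =>
        rosenblattIntegrand_nonneg hx.le (hxy.trans hu.1).le hu.1.le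
    have hy' : y ^ (-(H / 2)) * y ^ H = y ^ (H / 2) := by rw [← rpow_add hy]; ring_nf
    rw [rosenblattKernel, indicator_of_mem hmem, max_eq_right hxy.le]
    change |eH * (x * y) ^ (-(H / 2)) * ∫ u in Ioc y t, rosenblattIntegrand H x y u| ≤ _
    rw [abs_mul, abs_mul, abs_of_nonneg (rpow_nonneg (mul_pos hx hy).le _), abs_of_nonneg hI₀,
      mul_assoc, mul_rpow hx.le hy.le]
    gcongr
    calc x ^ (-(H / 2)) * y ^ (-(H / 2)) * ∫ u in Ioc y t, rosenblattIntegrand H x y u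
        ≤ x ^ (-(H / 2)) * y ^ (-(H / 2)) * (t ^ (2 * H - 1) / (2 * H - 1) +
          y ^ H * (y - x) ^ (H / 2 - 3 / 4) * (t ^ (H / 2 - 1 / 4) / (H / 2 - 1 / 4))) := by
          gcongr
          exact setIntegral_rosenblattIntegrand_le hH hx hxy hyt
      _ = _ := by rw [← hy']; ring
  · have hmem : (x, y) ∉ Icc (0 : ℝ) t ×ˢ Icc 0 t := fun h => hyt h.2.2
    rw [rosenblattKernel, indicator_of_notMem hmem, abs_zero]
    have : 0 < 2 * H - 1 := by linarith [hH.1]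
    have : 0 < H / 2 - 1 / 4 := by linarith [hH.1]
    positivity

lemma rpow_neg_mul_rpow_mul_sub_rpow_le {x y s r : ℝ} (hx : 0 < x) (hxy : x < y) (hs : 0 ≤ s)
    (hr : r ≤ 0) :
    x ^ (-s) * y ^ s * (y - x) ^ r ≤ 2 ^ (-r) * (x ^ (-s) * y ^ (s + r)) + 2 ^ s * (y - x) ^ r := by
  have hy : 0 < y := hx.trans hxy
  have hd : 0 < y - x := sub_pos.2 hxy
  have hfar_nonneg : 0 ≤ 2 ^ (-r) * (x ^ (-s) * y ^ (s + r)) := by positivity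
  have hnear_nonneg : 0 ≤ 2 ^ s * (y - x) ^ r := by positivity
  rcases le_or_gt y (2 * x) with hnear | hfar
  · have hratio : x ^ (-s) * y ^ s ≤ 2 ^ s := by
      calc x ^ (-s) * y ^ s ≤ x ^ (-s) * (2 * x) ^ s := by gcongr
        _ = 2 ^ s := by
          rw [mul_rpow zero_le_two hx.le, rpow_neg hx.le]
          field_simp
    calc x ^ (-s) * y ^ s * (y - x) ^ r ≤ 2 ^ s * (y - x) ^ r := by gcongr
      _ ≤ _ := by linarith
  · have hgap : (y - x) ^ r ≤ 2 ^ (-r) * y ^ r := by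
      calc (y - x) ^ r ≤ (y / 2) ^ r := rpow_le_rpow_of_nonpos (by positivity) (by linarith) hr
        _ = 2 ^ (-r) * y ^ r := by
          rw [div_rpow hy.le zero_le_two, rpow_neg zero_le_two]
          ring
    calc x ^ (-s) * y ^ s * (y - x) ^ r ≤ x ^ (-s) * y ^ s * (2 ^ (-r) * y ^ r) := by gcongr
      _ = 2 ^ (-r) * (x ^ (-s) * y ^ (s + r)) := by rw [rpow_add hy]; ring
      _ ≤ _ := by linarith

lemma measurable_rosenblattKernel (H eH t : ℝ) :
    Measurable (fun p : ℝ × ℝ => rosenblattKernel H eH t p.1 p.2) := by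
  let S : Set ((ℝ × ℝ) × ℝ) := {q | q.2 ∈ Ioc (max q.1.1 q.1.2) t}
  have hS : MeasurableSet S := by
    change MeasurableSet ({q : (ℝ × ℝ) × ℝ | max q.1.1 q.1.2 < q.2} ∩ {q | q.2 ≤ t})
    exact (measurableSet_lt (by fun_prop) (by fun_prop)).inter
      (measurableSet_le (by fun_prop) (by fun_prop))
  have hJ : Measurable fun p : ℝ × ℝ =>
      ∫ u in Ioc (max p.1 p.2) t, u ^ H * (u - p.1) ^ (H / 2 - 1) * (u - p.2) ^ (H / 2 - 1) := by
    have hF : StronglyMeasurable (S.indicator fun q : (ℝ × ℝ) × ℝ =>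
        q.2 ^ H * (q.2 - q.1.1) ^ (H / 2 - 1) * (q.2 - q.1.2) ^ (H / 2 - 1)) :=
      (Measurable.indicator (by fun_prop) hS).stronglyMeasurable
    convert (hF.integral_prod_right' (ν := volume)).measurable using 2 with p
    rw [← integral_indicator measurableSet_Ioc]
    rfl
  simp only [rosenblattKernel, Prod.mk.eta]
  exact Measurable.indicator (by fun_prop) (measurableSet_Icc.prod measurableSet_Icc)

noncomputable def rosenblattMajorant (H : ℝ) (p : ℝ × ℝ) : ℝ :=
  p.1 ^ (-(H / 2)) * p.2 ^ (H - 3 / 4) + p.1 ^ (H - 3 / 4) * p.2 ^ (-(H / 2))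
    + |p.1 - p.2| ^ (H / 2 - 3 / 4) + p.1 ^ (-(H / 2)) * p.2 ^ (-(H / 2))

lemma rosenblattMajorant_comm (H x y : ℝ) :
    rosenblattMajorant H (x, y) = rosenblattMajorant H (y, x) := by
  simp only [rosenblattMajorant, abs_sub_comm x y]
  ring

lemma memLp_rosenblattMajorant {H : ℝ} (hH : H ∈ Ioo (1 / 2) 1) (T : ℝ) :
    MemLp (rosenblattMajorant H) 2
      ((volume.restrict (Icc (0 : ℝ) T)).prod (volume.restrict (Icc 0 T))) := by
  have h₁ := memLp_two_rpow_Icc (s := -(H / 2)) (by linarith [hH.2]) T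
  have h₂ := memLp_two_rpow_Icc (s := H - 3 / 4) (by linarith [hH.1]) T
  have h₃ := memLp_two_abs_sub_rpow (s := H / 2 - 3 / 4) (by linarith [hH.1]) 0 T
  exact (((h₁.two_mul_prod h₂).add (h₂.two_mul_prod h₁)).add h₃).add (h₁.two_mul_prod h₁)

lemma exists_abs_rosenblattKernel_le (H eH : ℝ) {t : ℝ} (hH : H ∈ Ioo (1 / 2) 1) (ht : 0 ≤ t) :
    ∃ C, ∀ x y, 0 < x → 0 < y → x ≠ y →
      |rosenblattKernel H eH t x y| ≤ C * rosenblattMajorant H (x, y) := by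
  set A := t ^ (H / 2 - 1 / 4) / (H / 2 - 1 / 4)
  set B := t ^ (2 * H - 1) / (2 * H - 1)
  set c₁ : ℝ := 2 ^ (-(H / 2 - 3 / 4))
  set c₂ : ℝ := 2 ^ (H / 2)
  have hA : 0 ≤ A := div_nonneg (rpow_nonneg ht _) (by linarith [hH.1])
  have hB : 0 ≤ B := div_nonneg (rpow_nonneg ht _) (by linarith [hH.1])
  have hlt : ∀ x y, 0 < x → x < y →
      |rosenblattKernel H eH t x y| ≤ |eH| * (B + A * (c₁ + c₂)) * rosenblattMajorant H (x, y) := by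
    intro x y hx hxy
    have hy : 0 < y := hx.trans hxy
    have hsplit := rpow_neg_mul_rpow_mul_sub_rpow_le hx hxy (s := H / 2) (r := H / 2 - 3 / 4)
      (by linarith [hH.1]) (by linarith [hH.2])
    rw [show H / 2 + (H / 2 - 3 / 4) = H - 3 / 4 by ring] at hsplit
    set m₁ := x ^ (-(H / 2)) * y ^ (H - 3 / 4)
    set m₂ := x ^ (H - 3 / 4) * y ^ (-(H / 2))
    set m₃ := (y - x) ^ (H / 2 - 3 / 4)
    set m₄ := x ^ (-(H / 2)) * y ^ (-(H / 2))
    set M := m₁ + m₂ + m₃ + m₄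
    have hM : rosenblattMajorant H (x, y) = M := by
      rw [rosenblattMajorant, abs_sub_comm, abs_of_pos (sub_pos.2 hxy)]
    have : 0 ≤ m₁ := by positivity
    have : 0 ≤ m₂ := by positivity
    have : 0 ≤ m₃ := rpow_nonneg (sub_pos.2 hxy).le _
    have : 0 ≤ m₄ := by positivity
    refine (abs_rosenblattKernel_le_of_lt hH ht hx hxy).trans ?_
    rw [mul_assoc |eH|, hM]
    gcongr
    calc B * m₄ + A * (x ^ (-(H / 2)) * y ^ (H / 2) * m₃)
        ≤ B * m₄ + A * (c₁ * m₁ + c₂ * m₃) := by gcongr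
      _ ≤ B * M + A * (c₁ * M + c₂ * M) := by gcongr <;> linarith
      _ = (B + A * (c₁ + c₂)) * M := by ring
  refine ⟨|eH| * (B + A * (c₁ + c₂)), fun x y hx hy hxy => ?_⟩
  rcases hxy.lt_or_gt with hxy | hyx
  · exact hlt x y hx hxy
  · rw [rosenblattKernel_comm, rosenblattMajorant_comm]
    exact hlt y x hy hyx

lemma ae_pos_pos_ne (T : ℝ) :
    ∀ᵐ p ∂((volume.restrict (Icc (0 : ℝ) T)).prod (volume.restrict (Icc 0 T))),
      0 < p.1 ∧ 0 < p.2 ∧ p.1 ≠ p.2 := by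
  have hpos : ∀ᵐ x ∂(volume.restrict (Icc (0 : ℝ) T)), 0 < x := by
    rw [← Measure.restrict_congr_set Ioc_ae_eq_Icc]
    filter_upwards [ae_restrict_mem measurableSet_Ioc] with x hx using hx.1
  rw [Measure.ae_prod_iff_ae_ae (by measurability)]
  filter_upwards [hpos] with x hx
  filter_upwards [hpos, (countable_singleton x).ae_notMem _] with y hy hyx
  exact ⟨hx, hy, Ne.symm hyx⟩

theorem stmt3_general (T H eH : ℝ) (hH : H ∈ Ioo (1/2 : ℝ) 1)
    (t : ℝ) (ht : t ∈ Icc (0:ℝ) T) :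
    MemLp (fun p : ℝ × ℝ => rosenblattKernel H eH t p.1 p.2) 2
      ((volume.restrict (Icc (0:ℝ) T)).prod (volume.restrict (Icc (0:ℝ) T))) := by
  obtain ⟨C, hC⟩ := exists_abs_rosenblattKernel_le H eH hH ht.1
  refine ((memLp_rosenblattMajorant hH T).const_mul C).of_le
    (measurable_rosenblattKernel H eH t).aestronglyMeasurable ?_
  filter_upwards [ae_pos_pos_ne T] with p ⟨hx, hy, hxy⟩
  rw [Real.norm_eq_abs, Real.norm_eq_abs]
  exact (hC p.1 p.2 hx hy hxy).trans (le_abs_self _)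

/-- `K^H_t ∈ L²([0,T]²)` for every `t ∈ [0,T]`. -/
theorem stmt3 (T H eH : ℝ) (hT : 0 < T) (hH : H ∈ Ioo (1/2 : ℝ) 1) (heH : 0 < eH)
    (t : ℝ) (ht : t ∈ Icc (0:ℝ) T) :
    MemLp (fun p : ℝ × ℝ => rosenblattKernel H eH t p.1 p.2) 2
      ((volume.restrict (Icc (0:ℝ) T)).prod (volume.restrict (Icc (0:ℝ) T))) :=
  stmt3_general T H eH hH t ht
end

section
/- Let α ∈ (0, 1/2) and p > 1/(1−α). If F(φ) = x^α I^α_{0+}(y^{−α} φ)(x) and G(f) = x^α I^{−α}_{0+}(y^{−α} f)(x), then G ∘ F = Id on L^p([0,T]); that is, for every φ ∈ L^p([0,T]), x^α I^{−α}_{0+}(y ↦ y^{−α} · y^α I^α_{0+}(z^{−α} φ)(y))(x) = φ(x) for almost all x. -/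
open MeasureTheory Set Real
open scoped ENNReal

/-- Left Riemann–Liouville fractional integral of order `α`. -/
noncomputable def fracInt (α : ℝ) (f : ℝ → ℝ) (x : ℝ) : ℝ :=
  (1 / Real.Gamma α) * ∫ y in Ioc (0:ℝ) x, (x - y) ^ (α - 1) * f y

/-- Left Riemann–Liouville fractional derivative of order `α ∈ (0,1)`. -/
noncomputable def fracDeriv (α : ℝ) (f : ℝ → ℝ) (x : ℝ) : ℝ :=
  (1 / Real.Gamma (1 - α)) *
    deriv (fun z => ∫ y in Ioc (0:ℝ) z, (z - y) ^ (-α) * f y) x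

open Filter intervalIntegral
open scoped Topology


lemma beta01_eqC {α : ℝ} (hα : 0 < α) (hα1 : α < 1) {t : ℝ} (ht : t ∈ Icc (0:ℝ) 1) :
    (t:ℂ) ^ ((α:ℂ) - 1) * ((1:ℂ) - t) ^ (((1 - α : ℝ):ℂ) - 1)
      = ((t ^ (α - 1) * (1 - t) ^ (-α) : ℝ) : ℂ) := by
  have h1 : ((α:ℂ) - 1) = ((α - 1 : ℝ) : ℂ) := by push_cast; ring
  have h2 : (((1 - α : ℝ):ℂ) - 1) = ((-α : ℝ) : ℂ) := by push_cast; ring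
  have h3 : ((1:ℂ) - t) = ((1 - t : ℝ) : ℂ) := by push_cast; ring
  rw [h1, h2, h3, ← Complex.ofReal_cpow ht.1, ← Complex.ofReal_cpow (by linarith [ht.2]),
    ← Complex.ofReal_mul]

lemma beta01_intervalIntegrable {α : ℝ} (hα : 0 < α) (hα1 : α < 1) :
    IntervalIntegrable (fun t => t ^ (α - 1) * (1 - t) ^ (-α)) volume 0 1 := by
  have hc := Complex.betaIntegral_convergent (u := (α:ℂ)) (v := ((1 - α : ℝ):ℂ))
    (by simpa using hα) (by simpa using (by linarith : (0:ℝ) < 1 - α))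
  rw [intervalIntegrable_iff_integrableOn_Ioc_of_le zero_le_one] at hc ⊢
  have := hc.re
  apply this.congr
  filter_upwards [ae_restrict_mem measurableSet_Ioc] with t ht
  have := beta01_eqC hα hα1 (mem_Icc_of_Ioc ht)
  simp only [this, Complex.ofReal_re, RCLike.re_to_complex]

lemma beta01_value {α : ℝ} (hα : 0 < α) (hα1 : α < 1) :
    ∫ t in (0:ℝ)..1, t ^ (α - 1) * (1 - t) ^ (-α) = Real.Gamma α * Real.Gamma (1 - α) := by
  have h0 : (0:ℝ) < 1 - α := by linarith
  have hB := Complex.Gamma_mul_Gamma_eq_betaIntegral (s := (α:ℂ)) (t := ((1 - α : ℝ):ℂ))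
    (by simpa using hα) (by simpa using h0)
  have hsum : (α:ℂ) + ((1 - α : ℝ):ℂ) = 1 := by push_cast; ring
  rw [hsum, Complex.Gamma_one, one_mul] at hB
  have hint : Complex.betaIntegral (α:ℂ) ((1 - α : ℝ):ℂ)
      = ((∫ t in (0:ℝ)..1, t ^ (α - 1) * (1 - t) ^ (-α) : ℝ) : ℂ) := by
    rw [Complex.betaIntegral, ← intervalIntegral.integral_ofReal]
    apply intervalIntegral.integral_congr
    intro t ht
    rw [uIcc_of_le zero_le_one] at ht
    exact beta01_eqC hα hα1 ht
  rw [hint, Complex.Gamma_ofReal, Complex.Gamma_ofReal, ← Complex.ofReal_mul] at hB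
  exact_mod_cast hB.symm

lemma betaSub_ptwise {α : ℝ} (hα : 0 < α) (hα1 : α < 1) {u z : ℝ} (h : u < z) {t : ℝ}
    (ht : t ∈ Icc (0:ℝ) 1) :
    (z - ((z - u) * t + u)) ^ (-α) * (((z - u) * t + u) - u) ^ (α - 1)
      = (z - u)⁻¹ * (t ^ (α - 1) * (1 - t) ^ (-α)) := by
  have hc : (0:ℝ) < z - u := by linarith
  have e1 : z - ((z - u) * t + u) = (z - u) * (1 - t) := by ring
  have e2 : ((z - u) * t + u) - u = (z - u) * t := by ring
  rw [e1, e2, Real.mul_rpow hc.le (by linarith [ht.2]), Real.mul_rpow hc.le ht.1]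
  have e3 : (z - u) ^ (-α) * (z - u) ^ (α - 1) = (z - u)⁻¹ := by
    rw [← Real.rpow_add hc, show -α + (α - 1) = -1 by ring, Real.rpow_neg_one]
  calc (z - u) ^ (-α) * (1 - t) ^ (-α) * ((z - u) ^ (α - 1) * t ^ (α - 1))
      = ((z - u) ^ (-α) * (z - u) ^ (α - 1)) * (t ^ (α - 1) * (1 - t) ^ (-α)) := by ring
    _ = _ := by rw [e3]

lemma betaSub_integrableOn {α : ℝ} (hα : 0 < α) (hα1 : α < 1) {u z : ℝ} (h : u < z) :
    IntegrableOn (fun y => (z - y) ^ (-α) * (y - u) ^ (α - 1)) (Ioc u z) volume := by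
  have hc : (0:ℝ) < z - u := by linarith
  have hk := (beta01_intervalIntegrable hα hα1).const_mul (z - u)⁻¹
  have hF : IntervalIntegrable
      (fun t => (z - ((z - u) * t + u)) ^ (-α) * (((z - u) * t + u) - u) ^ (α - 1))
      volume 0 1 := by
    rw [intervalIntegrable_iff_integrableOn_Ioc_of_le zero_le_one] at hk ⊢
    apply hk.congr_fun ?_ measurableSet_Ioc
    intro t ht
    exact (betaSub_ptwise hα hα1 h (mem_Icc_of_Ioc ht)).symm
  have h1 := hF.comp_mul_left (c := (z - u)⁻¹)
  rw [zero_div, one_div, inv_inv] at h1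
  have h2 := h1.comp_sub_right u
  rw [zero_add] at h2
  have hfun : (fun x => (z - ((z - u) * ((z - u)⁻¹ * (x - u)) + u)) ^ (-α) *
      ((z - u) * ((z - u)⁻¹ * (x - u)) + u - u) ^ (α - 1))
      = fun y => (z - y) ^ (-α) * (y - u) ^ (α - 1) := by
    funext x
    have : (z - u) * ((z - u)⁻¹ * (x - u)) + u = x := by field_simp; ring
    rw [this]
  rw [hfun] at h2
  have hez : z - u + u = z := by ring
  rw [hez] at h2
  rwa [intervalIntegrable_iff_integrableOn_Ioc_of_le h.le] at h2

lemma betaSub_value {α : ℝ} (hα : 0 < α) (hα1 : α < 1) {u z : ℝ} (h : u < z) :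
    ∫ y in Ioc u z, (z - y) ^ (-α) * (y - u) ^ (α - 1)
      = Real.Gamma α * Real.Gamma (1 - α) := by
  have hc : (0:ℝ) < z - u := by linarith
  have hcm := intervalIntegral.integral_comp_mul_add
    (f := fun y => (z - y) ^ (-α) * (y - u) ^ (α - 1)) (a := (0:ℝ)) (b := 1) hc.ne' u
  rw [mul_zero, zero_add, mul_one] at hcm
  have hez : z - u + u = z := by ring
  rw [hez] at hcm
  have hL : (∫ t in (0:ℝ)..1, (z - ((z - u) * t + u)) ^ (-α) * (((z - u) * t + u) - u) ^ (α - 1))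
      = (z - u)⁻¹ * (Real.Gamma α * Real.Gamma (1 - α)) := by
    rw [← beta01_value hα hα1, ← intervalIntegral.integral_const_mul]
    apply intervalIntegral.integral_congr
    intro t ht
    rw [uIcc_of_le zero_le_one] at ht
    exact betaSub_ptwise hα hα1 h ht
  rw [hL, smul_eq_mul] at hcm
  have hiz : (z - u)⁻¹ ≠ 0 := inv_ne_zero hc.ne'
  have hval := (mul_left_cancel₀ hiz hcm).symm
  rw [← intervalIntegral.integral_of_le h.le, hval]

lemma ae_hasDerivAt_primitive {f : ℝ → ℝ} (hf : Integrable f volume) :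
    ∀ᵐ x ∂(volume : Measure ℝ), HasDerivAt (fun z => ∫ y in (0:ℝ)..z, f y) (f x) x := by
  set Φ : ℝ → ℝ := fun z => ∫ y in (0:ℝ)..z, f y with hΦ
  have hV := (IsUnifLocDoublingMeasure.vitaliFamily (volume : Measure ℝ) 1).ae_tendsto_average_norm_sub
    hf.locallyIntegrable
  filter_upwards [hV] with x hx
  rw [hasDerivAt_iff_tendsto_slope, ← nhdsLT_sup_nhdsGT, tendsto_sup]
  have hii : ∀ a b : ℝ, IntervalIntegrable f volume a b := fun a b => hf.intervalIntegrable
  have hconst : ∀ a b : ℝ, IntegrableOn (fun _ : ℝ => f x) (Ioc a b) volume := by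
    intro a b
    exact integrableOn_const (by simp [Real.volume_Ioc, ENNReal.ofReal_lt_top])
  constructor
  · -- from the left
    have hL : Tendsto (fun z => ⨍ y in Icc z x, ‖f y - f x‖) (𝓝[<] x) (𝓝 0) :=
      hx.comp (Real.tendsto_Icc_vitaliFamily_left x)
    rw [tendsto_iff_norm_sub_tendsto_zero]
    apply squeeze_zero' (Eventually.of_forall fun z => norm_nonneg _) ?_ hL
    filter_upwards [self_mem_nhdsWithin] with z (hz : z < x)
    have hr : (0:ℝ) < x - z := by linarith
    have hne1 : z - x ≠ 0 := by intro hh; apply hz.ne; linarith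
    have hne2 : x - z ≠ 0 := hr.ne'
    have e1 : Φ x - Φ z = ∫ y in Ioc z x, f y := by
      rw [hΦ]
      rw [← intervalIntegral.integral_of_le hz.le]
      rw [← intervalIntegral.integral_interval_sub_left (hii 0 x) (hii 0 z)]
    have e2 : slope Φ x z - f x = (x - z)⁻¹ * ∫ y in Ioc z x, (f y - f x) := by
      rw [integral_sub (hf.integrableOn) (hconst z x), ← e1]
      rw [setIntegral_const, Real.volume_real_Ioc_of_le hz.le, smul_eq_mul]
      rw [slope_def_field]
      field_simp
      ring
    rw [e2]
    have e3 : ⨍ y in Icc z x, ‖f y - f x‖ = (x - z)⁻¹ * ∫ y in Ioc z x, ‖f y - f x‖ := by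
      rw [setAverage_eq, integral_Icc_eq_integral_Ioc, Real.volume_real_Icc_of_le hz.le,
        smul_eq_mul]
    rw [e3, norm_mul, norm_inv, Real.norm_eq_abs (x - z), abs_of_pos hr]
    exact mul_le_mul_of_nonneg_left (MeasureTheory.norm_integral_le_integral_norm _)
      (inv_nonneg.2 hr.le)
  · -- from the right
    have hR : Tendsto (fun z => ⨍ y in Icc x z, ‖f y - f x‖) (𝓝[>] x) (𝓝 0) :=
      hx.comp (Real.tendsto_Icc_vitaliFamily_right x)
    rw [tendsto_iff_norm_sub_tendsto_zero]
    apply squeeze_zero' (Eventually.of_forall fun z => norm_nonneg _) ?_ hR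
    filter_upwards [self_mem_nhdsWithin] with z (hz : x < z)
    have hr : (0:ℝ) < z - x := by linarith
    have hne1 : z - x ≠ 0 := hr.ne'
    have e1 : Φ z - Φ x = ∫ y in Ioc x z, f y := by
      rw [hΦ, ← intervalIntegral.integral_of_le hz.le,
        ← intervalIntegral.integral_interval_sub_left (hii 0 z) (hii 0 x)]
    have e2 : slope Φ x z - f x = (z - x)⁻¹ * ∫ y in Ioc x z, (f y - f x) := by
      rw [integral_sub (hf.integrableOn) (hconst x z), ← e1]
      rw [setIntegral_const, Real.volume_real_Ioc_of_le hz.le, smul_eq_mul]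
      rw [slope_def_field]
      field_simp
    rw [e2]
    have e3 : ⨍ y in Icc x z, ‖f y - f x‖ = (z - x)⁻¹ * ∫ y in Ioc x z, ‖f y - f x‖ := by
      rw [setAverage_eq, integral_Icc_eq_integral_Ioc, Real.volume_real_Icc_of_le hz.le,
        smul_eq_mul]
    rw [e3, norm_mul, norm_inv, Real.norm_eq_abs (z - x), abs_of_pos hr]
    exact mul_le_mul_of_nonneg_left (MeasureTheory.norm_integral_le_integral_norm _)
      (inv_nonneg.2 hr.le)

lemma weight_integrableOn {T α p : ℝ} (hT : 0 < T) (hα : 0 < α) (hα1 : α < 1)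
    (hp : 1 / (1 - α) < p) {ψ : ℝ → ℝ} (hψmeas : Measurable ψ)
    (hψ : MemLp ψ (ENNReal.ofReal p) (volume.restrict (Icc (0:ℝ) T))) :
    IntegrableOn (fun u => u ^ (-α) * ψ u) (Icc (0:ℝ) T) volume := by
  have h1α : 0 < 1 - α := by linarith
  have hp1 : 1 < p := lt_trans (by rw [lt_div_iff₀ h1α]; nlinarith) hp
  have hp0 : 0 < p := by linarith
  have hpm1 : p - 1 ≠ 0 := by intro h; rw [sub_eq_zero] at h; exact hp1.ne h.symm
  set q' : ℝ := p / (p - 1) with hq'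
  have hq'pos : 0 < q' := div_pos hp0 (by linarith)
  have hαq' : α * q' < 1 := by
    rw [hq', mul_div_assoc', div_lt_one (by linarith : (0:ℝ) < p - 1)]
    rw [div_lt_iff₀ h1α] at hp
    nlinarith
  have hq0 : ENNReal.ofReal q' ≠ 0 := by
    simp [ENNReal.ofReal_eq_zero, not_le, hq'pos]
  have hqtop : ENNReal.ofReal q' ≠ ∞ := ENNReal.ofReal_ne_top
  have t1 : IntervalIntegrable (fun u : ℝ => u ^ (-(α * q'))) volume 0 T :=
    intervalIntegrable_rpow' (by linarith)
  rw [intervalIntegrable_iff_integrableOn_Ioc_of_le hT.le] at t1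
  have t2 : IntegrableOn (fun u : ℝ => u ^ (-(α * q'))) (Icc 0 T) volume :=
    (integrableOn_Icc_iff_integrableOn_Ioc (by finiteness)).2 t1
  have hwmeas : AEStronglyMeasurable (fun u : ℝ => u ^ (-α))
      (volume.restrict (Icc (0:ℝ) T)) := by
    have : Measurable fun u : ℝ => u ^ (-α) := by fun_prop
    exact this.aestronglyMeasurable
  have h1 : Integrable (fun u : ℝ => ‖u ^ (-α)‖ ^ (ENNReal.ofReal q').toReal)
      (volume.restrict (Icc (0:ℝ) T)) := by
    rw [ENNReal.toReal_ofReal hq'pos.le]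
    apply t2.congr
    filter_upwards [ae_restrict_mem measurableSet_Icc] with u hu
    rw [Real.norm_eq_abs, abs_of_nonneg (Real.rpow_nonneg hu.1 _),
      ← Real.rpow_mul hu.1, ← neg_mul]
  have h2 : MemLp (fun u : ℝ => u ^ (-α)) (ENNReal.ofReal q')
      (volume.restrict (Icc (0:ℝ) T)) := by
    have h3 : MemLp (fun u : ℝ => ‖u ^ (-α)‖ ^ (ENNReal.ofReal q').toReal)
        (ENNReal.ofReal q' / ENNReal.ofReal q') (volume.restrict (Icc (0:ℝ) T)) := by
      rw [ENNReal.div_self hq0 hqtop]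
      exact (memLp_one_iff_integrable).2 h1
    exact (memLp_norm_rpow_iff hwmeas hq0 hqtop).1 h3
  have hexp : (1:ℝ≥0∞) / 1 = 1 / ENNReal.ofReal q' + 1 / ENNReal.ofReal p := by
    rw [one_div (ENNReal.ofReal q'), one_div (ENNReal.ofReal p),
      ← ENNReal.ofReal_inv_of_pos hq'pos, ← ENNReal.ofReal_inv_of_pos hp0,
      ← ENNReal.ofReal_add (by positivity) (by positivity)]
    have hsum : q'⁻¹ + p⁻¹ = 1 := by
      rw [hq', inv_div]
      field_simp
      ring
    rw [hsum, ENNReal.ofReal_one]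
    simp
  have hcomb := by
    haveI : ENNReal.HolderTriple (ENNReal.ofReal q') (ENNReal.ofReal p) 1 :=
      ⟨by simpa [one_div] using hexp.symm⟩
    exact MemLp.smul (r := 1) hψ h2
  have := memLp_one_iff_integrable.1 hcomb
  exact this

lemma key_eq {α T : ℝ} (hα : 0 < α) (hα1 : α < 1) {g : ℝ → ℝ} (hgm : Measurable g)
    (hg : IntegrableOn g (Ioc 0 T) volume) {z : ℝ} (hz0 : 0 < z) (hzT : z ≤ T) :
    ∫ y in Ioc (0:ℝ) z, (z - y) ^ (-α) *
        ((1 / Real.Gamma α) * ∫ u in Ioc (0:ℝ) y, (y - u) ^ (α - 1) * g u)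
      = Real.Gamma (1 - α) * ∫ u in Ioc (0:ℝ) z, g u := by
  have hΓα : Real.Gamma α ≠ 0 := (Real.Gamma_pos_of_pos hα).ne'
  have hgz : IntegrableOn g (Ioc 0 z) volume := hg.mono_set (Ioc_subset_Ioc_right hzT)
  have hrp : ∀ c : ℝ, Measurable fun x : ℝ => x ^ c := fun c => by fun_prop
  set μz := volume.restrict (Ioc (0:ℝ) z) with hμz
  set H : ℝ × ℝ → ℝ :=
    fun p => if p.2 < p.1 then (z - p.1) ^ (-α) * ((p.1 - p.2) ^ (α - 1) * g p.2) else 0 with hH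
  have hHm : Measurable H := by
    apply Measurable.ite (measurableSet_lt measurable_snd measurable_fst) _ measurable_const
    exact ((hrp (-α)).comp (measurable_const.sub measurable_fst)).mul
      (((hrp (α - 1)).comp (measurable_fst.sub measurable_snd)).mul (hgm.comp measurable_snd))
  have haeIoo : ∀ᵐ u ∂μz, u ∈ Ioo (0:ℝ) z := by
    have h0 : ∀ᵐ u ∂(volume : Measure ℝ), u ≠ z := by
      rw [ae_iff]
      convert Real.volume_singleton (a := z) using 2
      ext u; simp
    filter_upwards [ae_restrict_mem measurableSet_Ioc, ae_restrict_of_ae h0] with u hu hne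
    exact ⟨hu.1, lt_of_le_of_ne hu.2 hne⟩
  -- slices in y
  have slice_y : ∀ u ∈ Ioo (0:ℝ) z,
      (fun y => H (y, u)) =ᵐ[μz] (Ioc u z).indicator
        (fun y => ((z - y) ^ (-α) * (y - u) ^ (α - 1)) * g u) := by
    intro u hu
    filter_upwards [ae_restrict_mem measurableSet_Ioc] with y hy
    rw [hH]
    by_cases h' : u < y
    · simp only [if_pos h']
      rw [indicator_of_mem (show y ∈ Ioc u z from ⟨h', hy.2⟩)]
      ring
    · simp only [if_neg h']
      rw [indicator_of_notMem (fun hc => h' hc.1)]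
  have hsub : ∀ u : ℝ, 0 < u → Ioc u z ∩ Ioc 0 z = Ioc u z := by
    intro u hu
    exact Set.inter_eq_left.2 (Ioc_subset_Ioc hu.le le_rfl)
  have hint_slice : ∀ u ∈ Ioo (0:ℝ) z, Integrable (fun y => H (y, u)) μz := by
    intro u hu
    apply Integrable.congr _ (slice_y u hu).symm
    rw [hμz, integrable_indicator_iff measurableSet_Ioc, IntegrableOn,
      Measure.restrict_restrict measurableSet_Ioc, hsub u hu.1]
    exact (betaSub_integrableOn hα hα1 hu.2).mul_const (g u)
  have slice_norm : ∀ u ∈ Ioo (0:ℝ) z,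
      ∫ y, ‖H (y, u)‖ ∂μz = (Real.Gamma α * Real.Gamma (1 - α)) * |g u| := by
    intro u hu
    have e : (fun y => ‖H (y, u)‖) =ᵐ[μz]
        (Ioc u z).indicator (fun y => ((z - y) ^ (-α) * (y - u) ^ (α - 1)) * |g u|) := by
      filter_upwards [slice_y u hu] with y hy
      rw [Real.norm_eq_abs, hy]
      by_cases h' : y ∈ Ioc u z
      · rw [indicator_of_mem h', indicator_of_mem h', abs_mul,
          abs_of_nonneg (mul_nonneg (Real.rpow_nonneg (by linarith [h'.2]) _)
            (Real.rpow_nonneg (by linarith [h'.1]) _))]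
      · rw [indicator_of_notMem h', indicator_of_notMem h', abs_zero]
    rw [integral_congr_ae e, hμz, MeasureTheory.integral_indicator measurableSet_Ioc,
      Measure.restrict_restrict measurableSet_Ioc, hsub u hu.1, MeasureTheory.integral_mul_const,
      betaSub_value hα hα1 hu.2]
  have slice_val : ∀ u ∈ Ioo (0:ℝ) z,
      ∫ y, H (y, u) ∂μz = (Real.Gamma α * Real.Gamma (1 - α)) * g u := by
    intro u hu
    rw [integral_congr_ae (slice_y u hu), hμz, MeasureTheory.integral_indicator measurableSet_Ioc,
      Measure.restrict_restrict measurableSet_Ioc, hsub u hu.1, MeasureTheory.integral_mul_const,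
      betaSub_value hα hα1 hu.2]
  have hprod : Integrable H (μz.prod μz) := by
    rw [integrable_prod_iff' hHm.aestronglyMeasurable]
    constructor
    · filter_upwards [haeIoo] with u hu using hint_slice u hu
    · apply (Integrable.congr ((hgz.abs).const_mul (Real.Gamma α * Real.Gamma (1 - α))))
      filter_upwards [haeIoo] with u hu
      exact (slice_norm u hu).symm
  have hswap := integral_integral_swap (f := fun y u => H (y, u)) hprod
  -- inner integral in u for fixed y
  have inner_y : ∀ᵐ y ∂μz, ∫ u, H (y, u) ∂μz
      = (z - y) ^ (-α) * ∫ u in Ioc (0:ℝ) y, (y - u) ^ (α - 1) * g u := by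
    filter_upwards [ae_restrict_mem measurableSet_Ioc] with y hy
    have hfn : (fun u => H (y, u)) = (Iio y).indicator
        (fun u => (z - y) ^ (-α) * ((y - u) ^ (α - 1) * g u)) := by
      funext u
      rw [hH]
      by_cases h' : u < y
      · simp only [if_pos h', indicator_of_mem (mem_Iio.2 h')]
      · simp only [if_neg h', indicator_of_notMem (fun hc => h' (mem_Iio.1 hc))]
    have hset : Iio y ∩ Ioc 0 z = Ioo 0 y := by
      ext u
      simp only [mem_inter_iff, mem_Iio, mem_Ioc, mem_Ioo]
      constructor
      · rintro ⟨h1, h2, h3⟩; exact ⟨h2, h1⟩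
      · rintro ⟨h1, h2⟩; exact ⟨h2, h1, by linarith [hy.2]⟩
    rw [hfn, hμz, MeasureTheory.integral_indicator measurableSet_Iio,
      Measure.restrict_restrict measurableSet_Iio, hset, MeasureTheory.integral_const_mul,
      ← integral_Ioc_eq_integral_Ioo]
  -- put everything together
  calc ∫ y in Ioc (0:ℝ) z, (z - y) ^ (-α) *
        ((1 / Real.Gamma α) * ∫ u in Ioc (0:ℝ) y, (y - u) ^ (α - 1) * g u)
      = (1 / Real.Gamma α) * ∫ y, (z - y) ^ (-α) *
          (∫ u in Ioc (0:ℝ) y, (y - u) ^ (α - 1) * g u) ∂μz := by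
        rw [← MeasureTheory.integral_const_mul]
        apply MeasureTheory.integral_congr_ae
        filter_upwards with y
        ring
    _ = (1 / Real.Gamma α) * ∫ y, (∫ u, H (y, u) ∂μz) ∂μz := by
        congr 1
        apply MeasureTheory.integral_congr_ae
        filter_upwards [inner_y] with y hy
        rw [hy]
    _ = (1 / Real.Gamma α) * ∫ u, (∫ y, H (y, u) ∂μz) ∂μz := by rw [hswap]
    _ = (1 / Real.Gamma α) * ∫ u, (Real.Gamma α * Real.Gamma (1 - α)) * g u ∂μz := by
        congr 1
        apply MeasureTheory.integral_congr_ae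
        filter_upwards [haeIoo] with u hu
        exact slice_val u hu
    _ = Real.Gamma (1 - α) * ∫ u in Ioc (0:ℝ) z, g u := by
        rw [MeasureTheory.integral_const_mul, hμz]
        field_simp

/-- `G ∘ F = Id` on `L^p([0,T])` for the weighted Kober–Erdélyi operators
`F φ = x^α I^α_{0+}(y^{-α} φ)` and `G f = x^α I^{-α}_{0+}(y^{-α} f)`. -/
theorem stmt5 (T α p : ℝ) (hT : 0 < T) (hα : α ∈ Ioo (0:ℝ) (1/2)) (hp : 1 / (1 - α) < p)
    (φ : ℝ → ℝ) (hφ : MemLp φ (ENNReal.ofReal p) (volume.restrict (Icc (0:ℝ) T))) :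
    ∀ᵐ x ∂(volume.restrict (Icc (0:ℝ) T)),
      x ^ α * fracDeriv α
        (fun y => y ^ (-α) * (y ^ α * fracInt α (fun z => z ^ (-α) * φ z) y)) x = φ x := by
  obtain ⟨hα0, hα2⟩ := hα
  have hα1 : α < 1 := by linarith
  set ψ : ℝ → ℝ := hφ.1.mk φ with hψdef
  have hψmeas : Measurable ψ := hφ.1.stronglyMeasurable_mk.measurable
  have hφψ : φ =ᵐ[volume.restrict (Icc (0:ℝ) T)] ψ := hφ.1.ae_eq_mk
  have hψp : MemLp ψ (ENNReal.ofReal p) (volume.restrict (Icc (0:ℝ) T)) := hφ.ae_eq hφψ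
  set g : ℝ → ℝ := fun u => u ^ (-α) * ψ u with hgdef
  have hgm : Measurable g := by
    have : Measurable fun u : ℝ => u ^ (-α) := by fun_prop
    exact this.mul hψmeas
  have hgI : IntegrableOn g (Icc (0:ℝ) T) volume :=
    weight_integrableOn hT hα0 hα1 hp hψmeas hψp
  have hgIoc : IntegrableOn g (Ioc (0:ℝ) T) volume := hgI.mono_set Ioc_subset_Icc_self
  set g₁ : ℝ → ℝ := (Ioc (0:ℝ) T).indicator g with hg₁
  have hg₁I : Integrable g₁ volume := (integrable_indicator_iff measurableSet_Ioc).2 hgIoc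
  have hD := ae_hasDerivAt_primitive hg₁I
  have hφψ' : ∀ᵐ u ∂(volume : Measure ℝ), u ∈ Icc (0:ℝ) T → φ u = ψ u :=
    (ae_restrict_iff' measurableSet_Icc).1 hφψ
  have hTne : ∀ᵐ x ∂(volume : Measure ℝ), x ≠ 0 ∧ x ≠ T := by
    have hz : (volume ({0, T} : Set ℝ)) = 0 :=
      (Set.toFinite ({0, T} : Set ℝ)).measure_zero volume
    have h0 : {x : ℝ | ¬(x ≠ 0 ∧ x ≠ T)} = {0, T} := by
      ext x
      simp only [mem_setOf_eq, not_and_or, not_not, mem_insert_iff, mem_singleton_iff]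
    rw [ae_iff, h0]
    exact hz
  filter_upwards [ae_restrict_mem measurableSet_Icc, ae_restrict_of_ae hD,
    ae_restrict_of_ae hTne, hφψ] with x hxIcc hDx hne hφx
  have hx0 : 0 < x := lt_of_le_of_ne hxIcc.1 (Ne.symm hne.1)
  have hxT : x < T := lt_of_le_of_ne hxIcc.2 hne.2
  -- the inner fractional integral, rewritten with g
  have hfrac : ∀ y : ℝ, 0 < y → y ≤ T →
      fracInt α (fun u => u ^ (-α) * φ u) y
        = (1 / Real.Gamma α) * ∫ u in Ioc (0:ℝ) y, (y - u) ^ (α - 1) * g u := by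
    intro y hy0 hyT
    rw [fracInt]
    congr 1
    apply MeasureTheory.integral_congr_ae
    have hae : ∀ᵐ u ∂(volume.restrict (Ioc (0:ℝ) y)), u ∈ Icc (0:ℝ) T → φ u = ψ u :=
      ae_restrict_of_ae hφψ'
    filter_upwards [hae, ae_restrict_mem measurableSet_Ioc] with u hu humem
    have heq : φ u = ψ u := hu ⟨humem.1.le, humem.2.trans hyT⟩
    simp only [hgdef, heq]
  -- local equality of the function being differentiated
  have hfeq : (fun z => ∫ y in Ioc (0:ℝ) z, (z - y) ^ (-α) *
        (y ^ (-α) * (y ^ α * fracInt α (fun w => w ^ (-α) * φ w) y)))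
      =ᶠ[nhds x] (fun z => Real.Gamma (1 - α) * ∫ y in (0:ℝ)..z, g₁ y) := by
    filter_upwards [isOpen_Ioo.mem_nhds (⟨hx0, hxT⟩ : x ∈ Ioo (0:ℝ) T)] with z hz
    have hz0 : 0 < z := hz.1
    have hzT : z < T := hz.2
    calc ∫ y in Ioc (0:ℝ) z, (z - y) ^ (-α) *
          (y ^ (-α) * (y ^ α * fracInt α (fun w => w ^ (-α) * φ w) y))
        = ∫ y in Ioc (0:ℝ) z, (z - y) ^ (-α) *
            ((1 / Real.Gamma α) * ∫ u in Ioc (0:ℝ) y, (y - u) ^ (α - 1) * g u) := by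
          apply setIntegral_congr_fun measurableSet_Ioc
          intro y hy
          dsimp only
          have h1 : y ^ (-α) * y ^ α = 1 := by
            rw [← Real.rpow_add hy.1]; norm_num
          rw [← mul_assoc (y ^ (-α)), h1, one_mul,
            hfrac y hy.1 (le_of_lt (lt_of_le_of_lt hy.2 hzT))]
      _ = Real.Gamma (1 - α) * ∫ u in Ioc (0:ℝ) z, g u :=
          key_eq hα0 hα1 hgm hgIoc hz0 hzT.le
      _ = Real.Gamma (1 - α) * ∫ y in (0:ℝ)..z, g₁ y := by
          rw [intervalIntegral.integral_of_le hz0.le]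
          congr 1
          apply setIntegral_congr_fun measurableSet_Ioc
          intro u hu
          rw [hg₁]
          exact (Set.indicator_of_mem (s := Ioc (0:ℝ) T) (a := u) ⟨hu.1, hu.2.trans hzT.le⟩ g).symm
  -- conclude
  simp only [fracDeriv]
  rw [Filter.EventuallyEq.deriv_eq hfeq]
  rw [(hDx.const_mul (Real.Gamma (1 - α))).deriv]
  have hg₁x : g₁ x = x ^ (-α) * ψ x := by
    rw [hg₁]
    exact Set.indicator_of_mem (s := Ioc (0:ℝ) T) (a := x) ⟨hx0, hxT.le⟩ g
  rw [hg₁x]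
  have hΓ : Real.Gamma (1 - α) ≠ 0 := (Real.Gamma_pos_of_pos (by linarith)).ne'
  have hxa : x ^ α * x ^ (-α) = 1 := by
    rw [← Real.rpow_add hx0]; norm_num
  have : x ^ α * (1 / Real.Gamma (1 - α) * (Real.Gamma (1 - α) * (x ^ (-α) * ψ x)))
      = (x ^ α * x ^ (-α)) * ψ x := by
    field_simp
  rw [this, hxa, one_mul]
  exact hφx.symm
end

section
/- Let H ∈ (1/2,1), φ ∈ L²([0,t]). Then the function g(y₁) = ∫_{y₁}^t u^H (u−y₁)^{H/2−1} (∫_{y₁}^u (u−y₂)^{H/2−1} y₂^{−H/2} |φ(y₂)| dy₂) du is finite for a.e. y₁ ∈ (0,t) and satisfies ∫_0^t y₁^{−H} g(y₁)² dy₁ < ∞. -/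
/-!
Exchanging the order of integration in `g` and bounding the resulting kernel
`∫_{y₂}^t u^H (u - y₁)^{H/2-1} (u - y₂)^{H/2-1} du ≤ C t^H (y₂ - y₁)^{H-1}` gives
`g(y₁) ≤ C t^H h(y₁)` with `h(y₁) = ∫_{y₁}^t (y₂ - y₁)^{H-1} y₂^{-H/2} |φ(y₂)| dy₂`.
With `δ = (1 - H)/2`, the Cauchy–Schwarz inequality for the measure `(y₂ - y₁)^{H-1} dy₂` and the
splitting `y₂^{-H/2} |φ| = y₂^{-(H+δ)/2} · y₂^{δ/2} |φ|` gives
`h(y₁)² ≤ C y₁^{-δ} ∫_{y₁}^t (y₂ - y₁)^{H-1} y₂^δ φ(y₂)² dy₂`. Exchanging the integrals once more,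
the Beta-type bound `∫_0^{y₂} y₁^{-(H+δ)} (y₂ - y₁)^{H-1} dy₁ ≤ C y₂^{-δ}` yields
`∫_0^t y₁^{-H} h² ≤ C ‖φ‖₂²`. Each kernel integral is bounded by splitting its domain where the two
singular factors are comparable.
-/

open MeasureTheory Set Real Function
open scoped ENNReal

theorem lintegral_Ioc_zero_rpow {b m : ℝ} (hb : -1 < b) (hm : 0 ≤ m) :
    ∫⁻ x in Ioc 0 m, ENNReal.ofReal (x ^ b) = ENNReal.ofReal (m ^ (b + 1) / (b + 1)) := by
  have hint : IntegrableOn (fun x : ℝ ↦ x ^ b) (Ioc 0 m) :=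
    (intervalIntegrable_iff_integrableOn_Ioc_of_le hm).mp
      (intervalIntegral.intervalIntegrable_rpow' hb)
  rw [← ofReal_integral_eq_lintegral_ofReal hint
      ((ae_restrict_iff' measurableSet_Ioc).mpr (ae_of_all _ fun x hx ↦ rpow_nonneg hx.1.le b)),
    ← intervalIntegral.integral_of_le hm, integral_rpow (Or.inl hb),
    zero_rpow (by linarith), sub_zero]

theorem lintegral_Ioi_rpow_of_lt {γ m : ℝ} (hγ : γ < -1) (hm : 0 < m) :
    ∫⁻ x in Ioi m, ENNReal.ofReal (x ^ γ) = ENNReal.ofReal (-m ^ (γ + 1) / (γ + 1)) := by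
  rw [← ofReal_integral_eq_lintegral_ofReal (integrableOn_Ioi_rpow_of_lt hγ hm)
      ((ae_restrict_iff' measurableSet_Ioi).mpr
        (ae_of_all _ fun x hx ↦ rpow_nonneg (hm.trans hx).le γ)),
    integral_Ioi_rpow_of_lt hγ hm]

theorem setLIntegral_Ioi_comp_sub (f : ℝ → ℝ≥0∞) (c : ℝ) :
    ∫⁻ u in Ioi c, f (u - c) = ∫⁻ x in Ioi 0, f x := by
  rw [← lintegral_indicator measurableSet_Ioi, ← lintegral_indicator measurableSet_Ioi,
    ← lintegral_sub_right_eq_self ((Ioi 0).indicator f) c]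
  congr 1
  ext u
  simp [indicator]

theorem setLIntegral_Ioc_comp_const_sub (f : ℝ → ℝ≥0∞) (a b c : ℝ) :
    ∫⁻ s in Ioc a b, f (c - s) = ∫⁻ s in Ioc (c - b) (c - a), f s := by
  rw [← Measure.restrict_congr_set (Ico_ae_eq_Ioc (a := c - b)),
    ← lintegral_indicator measurableSet_Ioc, ← lintegral_indicator measurableSet_Ico,
    ← lintegral_sub_left_eq_self ((Ico (c - b) (c - a)).indicator f) c]
  congr 1
  ext s
  simp only [indicator, mem_Ioc, mem_Ico]
  split_ifs <;> grind

theorem setLIntegral_ofReal_le_mul {α : Type*} [MeasurableSpace α] {μ : Measure α} {s : Set α}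
    (hs : MeasurableSet s) {f k : α → ℝ} {C : ℝ} (hC : 0 ≤ C) (h : ∀ x ∈ s, f x ≤ C * k x) :
    ∫⁻ x in s, ENNReal.ofReal (f x) ∂μ ≤ ENNReal.ofReal C * ∫⁻ x in s, ENNReal.ofReal (k x) ∂μ := by
  rw [← lintegral_const_mul' _ _ ENNReal.ofReal_ne_top]
  exact setLIntegral_mono' hs fun x hx ↦
    (ENNReal.ofReal_le_ofReal (h x hx)).trans_eq (ENNReal.ofReal_mul hC)

theorem lintegral_Ioi_sub_rpow_mul_sub_rpow_le {b c r s : ℝ} (hb : -1 < b) (hc : c ≤ 0)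
    (hbc : b + c < -1) (hrs : r < s) :
    ∫⁻ u in Ioi s, ENNReal.ofReal ((u - s) ^ b * (u - r) ^ c)
      ≤ ENNReal.ofReal ((1 / (b + 1) - 1 / (b + c + 1)) * (s - r) ^ (b + c + 1)) := by
  have hshift := setLIntegral_Ioi_comp_sub (fun x ↦ ENNReal.ofReal (x ^ b * (x + (s - r)) ^ c)) s
  simp only [sub_add_sub_cancel] at hshift
  rw [hshift]
  have hd : 0 < s - r := sub_pos.mpr hrs
  generalize s - r = d at hd ⊢
  have hnear : ∫⁻ x in Ioc 0 d, ENNReal.ofReal (x ^ b * (x + d) ^ c)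
      ≤ ENNReal.ofReal (d ^ c) * ENNReal.ofReal (d ^ (b + 1) / (b + 1)) := by
    rw [← lintegral_Ioc_zero_rpow hb hd.le]
    refine setLIntegral_ofReal_le_mul measurableSet_Ioc (rpow_nonneg hd.le _) fun x hx ↦ ?_
    rw [mul_comm]
    exact mul_le_mul_of_nonneg_right (rpow_le_rpow_of_nonpos hd (by linarith [hx.1]) hc)
      (rpow_nonneg hx.1.le _)
  have hfar : ∫⁻ x in Ioi d, ENNReal.ofReal (x ^ b * (x + d) ^ c)
      ≤ ENNReal.ofReal (-d ^ (b + c + 1) / (b + c + 1)) := by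
    rw [← lintegral_Ioi_rpow_of_lt hbc hd]
    refine setLIntegral_mono' measurableSet_Ioi fun x hx ↦ ENNReal.ofReal_le_ofReal ?_
    have hx0 : 0 < x := hd.trans hx
    rw [rpow_add hx0]
    exact mul_le_mul_of_nonneg_left (rpow_le_rpow_of_nonpos hx0 (by linarith) hc)
      (rpow_nonneg hx0.le _)
  rw [← Ioc_union_Ioi_eq_Ioi hd.le]
  refine (lintegral_union_le _ _ _).trans ((add_le_add hnear hfar).trans_eq ?_)
  rw [← ENNReal.ofReal_mul (rpow_nonneg hd.le _), ← ENNReal.ofReal_add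
    (mul_nonneg (rpow_nonneg hd.le _) (div_nonneg (rpow_nonneg hd.le _) (by linarith)))
    (div_nonneg_of_nonpos (neg_nonpos.mpr (rpow_nonneg hd.le _)) (by linarith))]
  congr 1
  rw [mul_div_assoc', ← rpow_add hd, show c + (b + 1) = b + c + 1 by ring]
  ring

theorem lintegral_Ioc_half_rpow_mul_sub_rpow_le {p q y : ℝ} (hp : -1 < p) (hq : q ≤ 0)
    (hy : 0 < y) :
    ∫⁻ s in Ioc 0 (y / 2), ENNReal.ofReal (s ^ p * (y - s) ^ q)
      ≤ ENNReal.ofReal (1 / (p + 1) * (y / 2) ^ (p + q + 1)) := by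
  have hy2 : 0 < y / 2 := half_pos hy
  refine (setLIntegral_ofReal_le_mul (k := fun s ↦ s ^ p) measurableSet_Ioc
    (rpow_nonneg hy2.le q) fun s hs ↦ ?_).trans_eq ?_
  · rw [mul_comm]
    exact mul_le_mul_of_nonneg_right (rpow_le_rpow_of_nonpos hy2 (by linarith [hs.2]) hq)
      (rpow_nonneg hs.1.le _)
  · rw [lintegral_Ioc_zero_rpow hp hy2.le, ← ENNReal.ofReal_mul (rpow_nonneg hy2.le _),
      mul_div_assoc', ← rpow_add hy2, show q + (p + 1) = p + q + 1 by ring, one_div_mul_eq_div]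

theorem lintegral_Ioc_rpow_mul_sub_rpow_le {p q y : ℝ} (hp : -1 < p) (hp0 : p ≤ 0) (hq : -1 < q)
    (hq0 : q ≤ 0) (hy : 0 < y) :
    ∫⁻ s in Ioc 0 y, ENNReal.ofReal (s ^ p * (y - s) ^ q)
      ≤ ENNReal.ofReal ((1 / (p + 1) + 1 / (q + 1)) * (y / 2) ^ (p + q + 1)) := by
  have hreflect : ∫⁻ s in Ioc (y / 2) y, ENNReal.ofReal (s ^ p * (y - s) ^ q)
      = ∫⁻ s in Ioc 0 (y / 2), ENNReal.ofReal (s ^ q * (y - s) ^ p) := by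
    have h := setLIntegral_Ioc_comp_const_sub
      (fun s ↦ ENNReal.ofReal (s ^ p * (y - s) ^ q)) 0 (y / 2) y
    rw [sub_zero, sub_half] at h
    simp only [h.symm, sub_sub_cancel, mul_comm]
  rw [← Ioc_union_Ioc_eq_Ioc (half_pos hy).le (half_le_self hy.le)]
  refine (lintegral_union_le _ _ _).trans ?_
  rw [hreflect]
  refine (add_le_add (lintegral_Ioc_half_rpow_mul_sub_rpow_le hp hq0 hy)
    (lintegral_Ioc_half_rpow_mul_sub_rpow_le hq hp0 hy)).trans_eq ?_
  have hy2 : 0 ≤ (y / 2) ^ (p + q + 1) := rpow_nonneg (half_pos hy).le _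
  rw [← ENNReal.ofReal_add (mul_nonneg (one_div_pos.mpr (by linarith)).le hy2)
    (mul_nonneg (one_div_pos.mpr (by linarith)).le (by rwa [add_comm q p]))]
  congr 1
  rw [add_comm q p]
  ring

theorem ENNReal.ofReal_rpow_mul_ofReal_rpow {y : ℝ} (hy : 0 < y) (a b : ℝ) :
    ENNReal.ofReal (y ^ a) * ENNReal.ofReal (y ^ b) = ENNReal.ofReal (y ^ (a + b)) := by
  rw [← ENNReal.ofReal_mul (rpow_nonneg hy.le a), ← Real.rpow_add hy]

theorem lintegral_mul_sq_le_of_sq_le_mul {α : Type*} [MeasurableSpace α] {μ : Measure α}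
    {K ψ w v : α → ℝ≥0∞} (hK : AEMeasurable K μ) (hw : AEMeasurable w μ)
    (hv : AEMeasurable v μ) (h : ∀ᵐ x ∂μ, ψ x ^ 2 ≤ w x * v x) :
    (∫⁻ x, K x * ψ x ∂μ) ^ 2 ≤ (∫⁻ x, K x * w x ∂μ) * ∫⁻ x, K x * v x ∂μ := by
  have hsqrt : ∀ a : ℝ≥0∞, (a ^ (2⁻¹ : ℝ)) ^ 2 = a := fun a ↦ by
    rw [← ENNReal.rpow_natCast, Nat.cast_ofNat, ENNReal.rpow_inv_rpow two_ne_zero]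
  have hpt : ∀ᵐ x ∂μ, K x * ψ x ≤ (K x * w x) ^ (2⁻¹ : ℝ) * (K x * v x) ^ (2⁻¹ : ℝ) := by
    filter_upwards [h] with x hx
    rw [← ENNReal.mul_rpow_of_nonneg _ _ (by norm_num)]
    calc K x * ψ x = ((K x * ψ x) ^ 2) ^ (2⁻¹ : ℝ) := by
          rw [← ENNReal.rpow_natCast, Nat.cast_ofNat, ENNReal.rpow_rpow_inv two_ne_zero]
      _ ≤ (K x * w x * (K x * v x)) ^ (2⁻¹ : ℝ) := by
          gcongr
          calc (K x * ψ x) ^ 2 = K x ^ 2 * ψ x ^ 2 := mul_pow _ _ _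
            _ ≤ K x ^ 2 * (w x * v x) := by gcongr
            _ = K x * w x * (K x * v x) := by ring
  have hCS := ENNReal.lintegral_mul_le_Lp_mul_Lq μ Real.HolderConjugate.two_two
    (f := fun x ↦ (K x * w x) ^ (2⁻¹ : ℝ)) (g := fun x ↦ (K x * v x) ^ (2⁻¹ : ℝ))
    ((hK.mul hw).pow_const _) ((hK.mul hv).pow_const _)
  simp only [Pi.mul_apply, one_div, ENNReal.rpow_inv_rpow two_ne_zero] at hCS
  calc (∫⁻ x, K x * ψ x ∂μ) ^ 2
      ≤ ((∫⁻ x, K x * w x ∂μ) ^ (2⁻¹ : ℝ) * (∫⁻ x, K x * v x ∂μ) ^ (2⁻¹ : ℝ)) ^ 2 := by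
        gcongr
        exact (lintegral_mono_ae hpt).trans hCS
    _ = (∫⁻ x, K x * w x ∂μ) * ∫⁻ x, K x * v x ∂μ := by rw [mul_pow, hsqrt, hsqrt]

theorem lintegral_Ioc_lintegral_Ioc_swap {a b : ℝ} {F : ℝ → ℝ → ℝ≥0∞}
    (hF : Measurable (uncurry F)) :
    ∫⁻ u in Ioc a b, ∫⁻ y in Ioc a u, F u y = ∫⁻ y in Ioc a b, ∫⁻ u in Ioc y b, F u y := by
  let S : Set (ℝ × ℝ) := {p | a < p.2 ∧ p.2 ≤ p.1 ∧ p.1 ≤ b}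
  have hS : MeasurableSet S := (measurableSet_lt measurable_const measurable_snd).inter
    ((measurableSet_le measurable_snd measurable_fst).inter
      (measurableSet_le measurable_fst measurable_const))
  have hpush : ∀ (s : Set ℝ) (G : ℝ → ℝ → ℝ≥0∞) (u : ℝ),
      s.indicator (fun u ↦ ∫⁻ y, G u y) u = ∫⁻ y, s.indicator (fun u ↦ G u y) u := by
    intro s G u
    by_cases hu : u ∈ s <;> simp [hu]
  calc ∫⁻ u in Ioc a b, ∫⁻ y in Ioc a u, F u y
      = ∫⁻ u, ∫⁻ y, S.indicator (uncurry F) (u, y) := by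
        simp_rw [← lintegral_indicator measurableSet_Ioc, hpush]
        congr 1; ext u; congr 1; ext y
        simp only [indicator, S, mem_ofPred_eq, mem_Ioc, uncurry]
        split_ifs <;> grind
    _ = ∫⁻ y, ∫⁻ u, S.indicator (uncurry F) (u, y) :=
        lintegral_lintegral_swap (hF.indicator hS).aemeasurable
    _ = ∫⁻ y in Ioc a b, ∫⁻ u in Icc y b, F u y := by
        simp_rw [← lintegral_indicator measurableSet_Ioc, ← lintegral_indicator measurableSet_Icc,
          hpush]
        congr 1; ext y; congr 1; ext u
        simp only [indicator, S, mem_ofPred_eq, mem_Ioc, mem_Icc, uncurry]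
        split_ifs <;> grind
    _ = ∫⁻ y in Ioc a b, ∫⁻ u in Ioc y b, F u y := by
        simp_rw [Measure.restrict_congr_set Ioc_ae_eq_Icc]

theorem lintegral_Ioc_rpow_mul_sub_rpow_mul_sub_rpow_le {H t y₁ y₂ : ℝ} (hH0 : 0 < H) (hH1 : H < 1)
    (hy₁ : 0 ≤ y₁) (hy₁₂ : y₁ < y₂) :
    ∫⁻ u in Ioc y₂ t, ENNReal.ofReal (u ^ H * (u - y₁) ^ (H / 2 - 1)) *
        ENNReal.ofReal ((u - y₂) ^ (H / 2 - 1))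
      ≤ ENNReal.ofReal (t ^ H * (2 / H + 1 / (1 - H))) * ENNReal.ofReal ((y₂ - y₁) ^ (H - 1)) := by
  calc ∫⁻ u in Ioc y₂ t, ENNReal.ofReal (u ^ H * (u - y₁) ^ (H / 2 - 1)) *
        ENNReal.ofReal ((u - y₂) ^ (H / 2 - 1))
      ≤ ∫⁻ u in Ioc y₂ t, ENNReal.ofReal (t ^ H) *
          ENNReal.ofReal ((u - y₂) ^ (H / 2 - 1) * (u - y₁) ^ (H / 2 - 1)) := by
        refine setLIntegral_mono' measurableSet_Ioc fun u hu ↦ ?_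
        have hu₀ : 0 < u := by linarith [hu.1]
        have hu₁ : 0 < u - y₁ := by linarith [hu.1]
        rw [← ENNReal.ofReal_mul (mul_nonneg (rpow_nonneg hu₀.le _) (rpow_nonneg hu₁.le _)),
          ← ENNReal.ofReal_mul (rpow_nonneg (hu₀.le.trans hu.2) _)]
        refine ENNReal.ofReal_le_ofReal ?_
        rw [mul_comm ((u - y₂) ^ _), ← mul_assoc]
        gcongr
        · exact rpow_nonneg (by linarith [hu.1]) _
        · exact hu.2
    _ ≤ ENNReal.ofReal (t ^ H) * ∫⁻ u in Ioi y₂,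
          ENNReal.ofReal ((u - y₂) ^ (H / 2 - 1) * (u - y₁) ^ (H / 2 - 1)) := by
        rw [lintegral_const_mul' _ _ ENNReal.ofReal_ne_top]
        gcongr
        exact Ioc_subset_Ioi_self
    _ ≤ ENNReal.ofReal (t ^ H) * ENNReal.ofReal ((2 / H + 1 / (1 - H)) * (y₂ - y₁) ^ (H - 1)) := by
        gcongr
        have h := lintegral_Ioi_sub_rpow_mul_sub_rpow_le (b := H / 2 - 1) (c := H / 2 - 1)
          (by linarith) (by linarith) (by linarith) hy₁₂
        have hC :
            1 / (H / 2 - 1 + 1) - 1 / (H / 2 - 1 + (H / 2 - 1) + 1) = 2 / H + 1 / (1 - H) := by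
          rw [show H / 2 - 1 + (H / 2 - 1) + 1 = -(1 - H) by ring,
            show H / 2 - 1 + 1 = H / 2 by ring]
          field_simp
          ring
        rwa [hC, show H / 2 - 1 + (H / 2 - 1) + 1 = H - 1 by ring] at h
    _ = ENNReal.ofReal (t ^ H * (2 / H + 1 / (1 - H))) * ENNReal.ofReal ((y₂ - y₁) ^ (H - 1)) := by
        have hd : 0 ≤ (y₂ - y₁) ^ (H - 1) := rpow_nonneg (by linarith) _
        have hC : 0 ≤ 2 / H + 1 / (1 - H) :=
          add_nonneg (by positivity) (one_div_pos.mpr (by linarith)).le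
        rw [← ENNReal.ofReal_mul' (mul_nonneg hC hd), ← ENNReal.ofReal_mul' hd, mul_assoc]

/-- The right-sided Riemann–Liouville integral of order `α` on `(y, t]`, without the factor
`1 / Γ(α)`. -/
noncomputable def rlIntegralRight (α t : ℝ) (ψ : ℝ → ℝ≥0∞) (y : ℝ) : ℝ≥0∞ :=
  ∫⁻ u in Ioc y t, ENNReal.ofReal ((u - y) ^ (α - 1)) * ψ u

theorem measurable_rlIntegralRight (α t : ℝ) {ψ : ℝ → ℝ≥0∞} (hψ : Measurable ψ) :
    Measurable (rlIntegralRight α t ψ) := by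
  let S : Set (ℝ × ℝ) := {p | p.1 < p.2 ∧ p.2 ≤ t}
  have hS : MeasurableSet S :=
    (measurableSet_lt measurable_fst measurable_snd).inter
      (measurableSet_le measurable_snd measurable_const)
  have hF : Measurable (uncurry fun y u ↦ ENNReal.ofReal ((u - y) ^ (α - 1)) * ψ u) := by
    fun_prop
  unfold rlIntegralRight
  simp_rw [← lintegral_indicator measurableSet_Ioc]
  exact (hF.indicator hS).lintegral_prod_right'

theorem lintegral_iterated_kernel_le_rlIntegralRight {H t y₁ : ℝ} (hH0 : 0 < H) (hH1 : H < 1)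
    (hy₁ : 0 ≤ y₁) {ψ : ℝ → ℝ≥0∞} (hψ : Measurable ψ) :
    ∫⁻ u in Ioc y₁ t, ENNReal.ofReal (u ^ H * (u - y₁) ^ (H / 2 - 1)) *
        ∫⁻ y₂ in Ioc y₁ u, ENNReal.ofReal ((u - y₂) ^ (H / 2 - 1)) * ψ y₂
      ≤ ENNReal.ofReal (t ^ H * (2 / H + 1 / (1 - H))) * rlIntegralRight H t ψ y₁ := by
  calc ∫⁻ u in Ioc y₁ t, ENNReal.ofReal (u ^ H * (u - y₁) ^ (H / 2 - 1)) *
        ∫⁻ y₂ in Ioc y₁ u, ENNReal.ofReal ((u - y₂) ^ (H / 2 - 1)) * ψ y₂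
      = ∫⁻ u in Ioc y₁ t, ∫⁻ y₂ in Ioc y₁ u, ENNReal.ofReal (u ^ H * (u - y₁) ^ (H / 2 - 1)) *
          (ENNReal.ofReal ((u - y₂) ^ (H / 2 - 1)) * ψ y₂) := by
        simp_rw [lintegral_const_mul' _ _ ENNReal.ofReal_ne_top]
    _ = ∫⁻ y₂ in Ioc y₁ t, ∫⁻ u in Ioc y₂ t, ENNReal.ofReal (u ^ H * (u - y₁) ^ (H / 2 - 1)) *
          (ENNReal.ofReal ((u - y₂) ^ (H / 2 - 1)) * ψ y₂) :=
        lintegral_Ioc_lintegral_Ioc_swap (by fun_prop)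
    _ = ∫⁻ y₂ in Ioc y₁ t, (∫⁻ u in Ioc y₂ t, ENNReal.ofReal (u ^ H * (u - y₁) ^ (H / 2 - 1)) *
          ENNReal.ofReal ((u - y₂) ^ (H / 2 - 1))) * ψ y₂ := by
        simp_rw [← mul_assoc]
        exact lintegral_congr fun y₂ ↦ lintegral_mul_const _ (by fun_prop)
    _ ≤ ∫⁻ y₂ in Ioc y₁ t, ENNReal.ofReal (t ^ H * (2 / H + 1 / (1 - H))) *
          (ENNReal.ofReal ((y₂ - y₁) ^ (H - 1)) * ψ y₂) := by
        refine setLIntegral_mono' measurableSet_Ioc fun y₂ hy₂ ↦ ?_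
        rw [← mul_assoc]
        gcongr
        exact lintegral_Ioc_rpow_mul_sub_rpow_mul_sub_rpow_le hH0 hH1 hy₁ hy₂.1
    _ = ENNReal.ofReal (t ^ H * (2 / H + 1 / (1 - H))) * rlIntegralRight H t ψ y₁ :=
        lintegral_const_mul' _ _ ENNReal.ofReal_ne_top

theorem rlIntegralRight_sq_le {H t y₁ : ℝ} (hH0 : 0 < H) (hH1 : H < 1) (hy₁ : 0 < y₁)
    {f : ℝ → ℝ≥0∞} (hf : Measurable f) :
    rlIntegralRight H t (fun y ↦ ENNReal.ofReal (y ^ (-(H / 2))) * f y) y₁ ^ 2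
      ≤ ENNReal.ofReal ((1 / H + 2 / (1 - H)) * y₁ ^ (-((1 - H) / 2))) *
          rlIntegralRight H t (fun y ↦ ENNReal.ofReal (y ^ ((1 - H) / 2)) * f y ^ 2) y₁ := by
  set δ := (1 - H) / 2 with hδ_def
  have hweights : ∀ᵐ y₂ ∂(volume.restrict (Ioc y₁ t)),
      (ENNReal.ofReal (y₂ ^ (-(H / 2))) * f y₂) ^ 2
        ≤ ENNReal.ofReal (y₂ ^ (-(H + δ))) * (ENNReal.ofReal (y₂ ^ δ) * f y₂ ^ 2) := by
    filter_upwards [ae_restrict_mem measurableSet_Ioc] with y₂ hy₂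
    have hy₂0 : 0 < y₂ := hy₁.trans hy₂.1
    rw [mul_pow, sq (ENNReal.ofReal _), ENNReal.ofReal_rpow_mul_ofReal_rpow hy₂0, ← mul_assoc,
      ENNReal.ofReal_rpow_mul_ofReal_rpow hy₂0, show -(H + δ) + δ = -(H / 2) + -(H / 2) by ring]
  have hA : ∫⁻ y₂ in Ioc y₁ t, ENNReal.ofReal ((y₂ - y₁) ^ (H - 1)) *
        ENNReal.ofReal (y₂ ^ (-(H + δ)))
      ≤ ENNReal.ofReal ((1 / H + 2 / (1 - H)) * y₁ ^ (-δ)) := by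
    calc ∫⁻ y₂ in Ioc y₁ t, ENNReal.ofReal ((y₂ - y₁) ^ (H - 1)) *
          ENNReal.ofReal (y₂ ^ (-(H + δ)))
        ≤ ∫⁻ y₂ in Ioi y₁, ENNReal.ofReal ((y₂ - y₁) ^ (H - 1) * (y₂ - 0) ^ (-(H + δ))) := by
          refine (setLIntegral_mono' measurableSet_Ioc fun y₂ hy₂ ↦ ?_).trans
            (lintegral_mono_set Ioc_subset_Ioi_self)
          rw [sub_zero, ENNReal.ofReal_mul (rpow_nonneg (sub_nonneg.mpr hy₂.1.le) _)]
      _ ≤ ENNReal.ofReal ((1 / (H - 1 + 1) - 1 / (H - 1 + -(H + δ) + 1)) *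
            (y₁ - 0) ^ (H - 1 + -(H + δ) + 1)) :=
          lintegral_Ioi_sub_rpow_mul_sub_rpow_le (by linarith) (by linarith) (by linarith) hy₁
      _ = ENNReal.ofReal ((1 / H + 2 / (1 - H)) * y₁ ^ (-δ)) := by
          rw [show H - 1 + -(H + δ) + 1 = -δ by ring, show H - 1 + 1 = H by ring, sub_zero]
          congr 2
          rw [hδ_def]
          field_simp
          ring
  exact (lintegral_mul_sq_le_of_sq_le_mul (by fun_prop) (by fun_prop) (by fun_prop)
    hweights).trans (by gcongr; exact le_rfl)

theorem lintegral_rpow_mul_rlIntegralRight_le {α p t : ℝ} (hα : 0 < α) (hα1 : α ≤ 1)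
    (hp : -1 < p) (hp0 : p ≤ 0) {v : ℝ → ℝ≥0∞} (hv : Measurable v) :
    ∫⁻ y₁ in Ioc 0 t, ENNReal.ofReal (y₁ ^ p) * rlIntegralRight α t v y₁
      ≤ ENNReal.ofReal (1 / (p + 1) + 1 / α) *
          ∫⁻ y in Ioc 0 t, ENNReal.ofReal ((y / 2) ^ (p + α)) * v y := by
  have hC : 0 ≤ 1 / (p + 1) + 1 / α :=
    add_nonneg (one_div_pos.mpr (by linarith)).le (one_div_pos.mpr hα).le
  calc ∫⁻ y₁ in Ioc 0 t, ENNReal.ofReal (y₁ ^ p) * rlIntegralRight α t v y₁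
      = ∫⁻ y₁ in Ioc 0 t, ∫⁻ y₂ in Ioc y₁ t,
          ENNReal.ofReal (y₁ ^ p) * ENNReal.ofReal ((y₂ - y₁) ^ (α - 1)) * v y₂ := by
        simp_rw [rlIntegralRight, ← lintegral_const_mul' _ _ ENNReal.ofReal_ne_top, mul_assoc]
    _ = ∫⁻ y₂ in Ioc 0 t,
          (∫⁻ y₁ in Ioc 0 y₂, ENNReal.ofReal (y₁ ^ p * (y₂ - y₁) ^ (α - 1))) * v y₂ := by
        rw [← lintegral_Ioc_lintegral_Ioc_swap (by fun_prop)]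
        refine setLIntegral_congr_fun measurableSet_Ioc fun y₂ _ ↦ ?_
        rw [← lintegral_mul_const _ (by fun_prop)]
        refine setLIntegral_congr_fun measurableSet_Ioc fun y₁ hy₁ ↦ ?_
        rw [ENNReal.ofReal_mul (rpow_nonneg hy₁.1.le _)]
    _ ≤ ∫⁻ y₂ in Ioc 0 t, ENNReal.ofReal (1 / (p + 1) + 1 / α) *
          (ENNReal.ofReal ((y₂ / 2) ^ (p + α)) * v y₂) := by
        refine setLIntegral_mono' measurableSet_Ioc fun y₂ hy₂ ↦ ?_
        rw [← mul_assoc, ← ENNReal.ofReal_mul hC]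
        gcongr
        have h := lintegral_Ioc_rpow_mul_sub_rpow_le hp hp0 (q := α - 1) (by linarith)
          (by linarith) hy₂.1
        rwa [show α - 1 + 1 = α by ring, show p + (α - 1) + 1 = p + α by ring] at h
    _ = _ := lintegral_const_mul' _ _ ENNReal.ofReal_ne_top

theorem lintegral_rpow_neg_mul_rlIntegralRight_sq_le {H t : ℝ} (hH0 : 0 < H) (hH1 : H < 1)
    {f : ℝ → ℝ≥0∞} (hf : Measurable f) :
    ∫⁻ y₁ in Ioc 0 t, ENNReal.ofReal (y₁ ^ (-H)) *
        rlIntegralRight H t (fun y ↦ ENNReal.ofReal (y ^ (-(H / 2))) * f y) y₁ ^ 2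
      ≤ ENNReal.ofReal ((1 / H + 2 / (1 - H)) ^ 2 * 2 ^ ((1 - H) / 2)) *
          ∫⁻ y in Ioc 0 t, f y ^ 2 := by
  set δ := (1 - H) / 2 with hδ_def
  set C := 1 / H + 2 / (1 - H)
  have hC : 0 ≤ C := by
    have : 0 < 1 - H := by linarith
    positivity
  set v : ℝ → ℝ≥0∞ := fun y ↦ ENNReal.ofReal (y ^ δ) * f y ^ 2
  have hv : ∀ y ∈ Ioc 0 t, ENNReal.ofReal ((y / 2) ^ (-(H + δ) + H)) * v y
      = ENNReal.ofReal (2 ^ δ) * f y ^ 2 := by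
    intro y hy
    have h2 : (y / 2) ^ (-(H + δ) + H) * y ^ δ = 2 ^ δ := by
      rw [show -(H + δ) + H = -δ by ring, rpow_neg (by linarith [hy.1]),
        div_rpow hy.1.le zero_le_two, inv_div, div_mul_cancel₀ _ (rpow_pos_of_pos hy.1 _).ne']
    rw [← mul_assoc, ← ENNReal.ofReal_mul (rpow_nonneg (by linarith [hy.1]) _), h2]
  calc ∫⁻ y₁ in Ioc 0 t, ENNReal.ofReal (y₁ ^ (-H)) *
        rlIntegralRight H t (fun y ↦ ENNReal.ofReal (y ^ (-(H / 2))) * f y) y₁ ^ 2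
      ≤ ∫⁻ y₁ in Ioc 0 t, ENNReal.ofReal C *
          (ENNReal.ofReal (y₁ ^ (-(H + δ))) * rlIntegralRight H t v y₁) := by
        refine setLIntegral_mono' measurableSet_Ioc fun y₁ hy₁ ↦ ?_
        calc ENNReal.ofReal (y₁ ^ (-H)) *
              rlIntegralRight H t (fun y ↦ ENNReal.ofReal (y ^ (-(H / 2))) * f y) y₁ ^ 2
            ≤ ENNReal.ofReal (y₁ ^ (-H)) *
                (ENNReal.ofReal (C * y₁ ^ (-δ)) * rlIntegralRight H t v y₁) := by
              gcongr
              exact rlIntegralRight_sq_le hH0 hH1 hy₁.1 hf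
          _ = ENNReal.ofReal C * (ENNReal.ofReal (y₁ ^ (-(H + δ))) * rlIntegralRight H t v y₁) := by
              rw [ENNReal.ofReal_mul hC, show -(H + δ) = -H + -δ by ring,
                ← ENNReal.ofReal_rpow_mul_ofReal_rpow hy₁.1]
              ring
    _ = ENNReal.ofReal C * ∫⁻ y₁ in Ioc 0 t,
          ENNReal.ofReal (y₁ ^ (-(H + δ))) * rlIntegralRight H t v y₁ :=
        lintegral_const_mul' _ _ ENNReal.ofReal_ne_top
    _ ≤ ENNReal.ofReal C * (ENNReal.ofReal (1 / (-(H + δ) + 1) + 1 / H) *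
          ∫⁻ y in Ioc 0 t, ENNReal.ofReal ((y / 2) ^ (-(H + δ) + H)) * v y) := by
        gcongr
        exact lintegral_rpow_mul_rlIntegralRight_le hH0 hH1.le (by linarith) (by linarith)
          (by fun_prop)
    _ = ENNReal.ofReal C *
          (ENNReal.ofReal C * (ENNReal.ofReal (2 ^ δ) * ∫⁻ y in Ioc 0 t, f y ^ 2)) := by
        rw [setLIntegral_congr_fun measurableSet_Ioc hv,
          lintegral_const_mul' _ _ ENNReal.ofReal_ne_top]
        congr 3
        simp only [C, hδ_def]
        field_simp
        ring
    _ = _ := by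
        rw [← mul_assoc, ← mul_assoc, ← ENNReal.ofReal_mul hC, ← ENNReal.ofReal_mul (by positivity),
          sq]

theorem lintegral_rpow_neg_mul_rlIntegralRight_sq_lt_top {H t : ℝ} (hH0 : 0 < H) (hH1 : H < 1)
    {φ : ℝ → ℝ} (hφm : Measurable φ) (hφ : MemLp φ 2 (volume.restrict (Ioc 0 t))) :
    ∫⁻ y₁ in Ioc 0 t, ENNReal.ofReal (y₁ ^ (-H)) *
        rlIntegralRight H t (fun y ↦ ENNReal.ofReal (y ^ (-(H / 2))) * ENNReal.ofReal |φ y|) y₁ ^ 2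
      < ⊤ := by
  refine (lintegral_rpow_neg_mul_rlIntegralRight_sq_le hH0 hH1 (by fun_prop)).trans_lt
    (ENNReal.mul_lt_top ENNReal.ofReal_lt_top ?_)
  simp_rw [← ENNReal.ofReal_pow (abs_nonneg _), sq_abs]
  exact hφ.integrable_sq.lintegral_lt_top

theorem setLIntegral_Ioc_ofReal_rpow_mul_abs_eq {a b t u y₁ : ℝ} (hy₁ : 0 ≤ y₁) (hut : u ≤ t)
    {φ φ' : ℝ → ℝ} (hφφ' : ∀ᵐ y, y ∈ Icc 0 t → φ y = φ' y) :
    ∫⁻ y₂ in Ioc y₁ u, ENNReal.ofReal ((u - y₂) ^ a * y₂ ^ b * |φ y₂|)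
      = ∫⁻ y₂ in Ioc y₁ u, ENNReal.ofReal ((u - y₂) ^ a) *
          (ENNReal.ofReal (y₂ ^ b) * ENNReal.ofReal |φ' y₂|) := by
  refine lintegral_congr_ae ?_
  filter_upwards [ae_restrict_mem measurableSet_Ioc, ae_restrict_of_ae hφφ'] with y₂ hy₂ hφy₂
  have hy₂0 : 0 ≤ y₂ := hy₁.trans hy₂.1.le
  rw [hφy₂ ⟨hy₂0, hy₂.2.trans hut⟩, ENNReal.ofReal_mul (mul_nonneg
    (rpow_nonneg (sub_nonneg.mpr hy₂.2) _) (rpow_nonneg hy₂0 _)),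
    ENNReal.ofReal_mul (rpow_nonneg (sub_nonneg.mpr hy₂.2) _), mul_assoc]

theorem ae_lt_top_of_setLIntegral_mul_sq_lt_top {α : Type*} [MeasurableSpace α] {μ : Measure α}
    {s : Set α} (hs : MeasurableSet s) {w F : α → ℝ≥0∞} (hw : Measurable w) (hF : Measurable F)
    (hw0 : ∀ x ∈ s, w x ≠ 0) (h : ∫⁻ x in s, w x * F x ^ 2 ∂μ < ⊤) :
    ∀ᵐ x ∂μ.restrict s, F x < ⊤ := by
  filter_upwards [ae_lt_top (by fun_prop) h.ne, ae_restrict_mem hs] with x hlt hx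
  exact (ENNReal.pow_lt_top_iff.mp (ENNReal.lt_top_of_mul_ne_top_right hlt.ne (hw0 x hx)))
    |>.resolve_right two_ne_zero

theorem stmt19_general (H t : ℝ) (hH : H ∈ Ioo (1/2 : ℝ) 1)
    (φ : ℝ → ℝ) (hφ : MemLp φ 2 (volume.restrict (Icc (0:ℝ) t)))
    (g : ℝ → ℝ≥0∞)
    (hg : ∀ y₁, g y₁ = ∫⁻ u in Ioc y₁ t,
      ENNReal.ofReal (u ^ H * (u - y₁) ^ (H/2 - 1)) *
        ∫⁻ y₂ in Ioc y₁ u,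
          ENNReal.ofReal ((u - y₂) ^ (H/2 - 1) * y₂ ^ (-(H/2)) * |φ y₂|)) :
    (∀ᵐ y₁ ∂(volume.restrict (Ioo (0:ℝ) t)), g y₁ < ⊤) ∧
    ∫⁻ y₁ in Ioo (0:ℝ) t, ENNReal.ofReal (y₁ ^ (-H)) * (g y₁) ^ 2 < ⊤ := by
  obtain ⟨hH2, hH1⟩ := hH
  have hH0 : 0 < H := by linarith
  set φ' := hφ.1.mk φ
  have hφ' : Measurable φ' := hφ.1.stronglyMeasurable_mk.measurable
  have hφφ' : ∀ᵐ y, y ∈ Icc 0 t → φ y = φ' y :=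
    (ae_restrict_iff' measurableSet_Icc).mp hφ.1.ae_eq_mk
  set h := rlIntegralRight H t fun y ↦ ENNReal.ofReal (y ^ (-(H / 2))) * ENNReal.ofReal |φ' y|
  set C := ENNReal.ofReal (t ^ H * (2 / H + 1 / (1 - H)))
  have hgh : ∀ y₁ ∈ Ioo 0 t, g y₁ ≤ C * h y₁ := by
    intro y₁ hy₁
    rw [hg y₁, setLIntegral_congr_fun measurableSet_Ioc fun u hu ↦ by
      rw [setLIntegral_Ioc_ofReal_rpow_mul_abs_eq hy₁.1.le hu.2 hφφ']]
    exact lintegral_iterated_kernel_le_rlIntegralRight hH0 hH1 hy₁.1.le (by fun_prop)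
  have hfin : ∫⁻ y₁ in Ioo 0 t, ENNReal.ofReal (y₁ ^ (-H)) * (C * h y₁) ^ 2 < ⊤ := by
    simp_rw [Measure.restrict_congr_set Ioo_ae_eq_Ioc, mul_pow, mul_left_comm _ (C ^ 2)]
    rw [lintegral_const_mul' _ _ (ENNReal.pow_ne_top ENNReal.ofReal_ne_top)]
    exact ENNReal.mul_lt_top (ENNReal.pow_lt_top ENNReal.ofReal_lt_top)
      (lintegral_rpow_neg_mul_rlIntegralRight_sq_lt_top hH0 hH1 hφ'
        ((hφ.ae_eq hφ.1.ae_eq_mk).mono_measure (Measure.restrict_mono Ioc_subset_Icc_self le_rfl)))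
  refine ⟨?_, (setLIntegral_mono' measurableSet_Ioo fun y₁ hy₁ ↦ ?_).trans_lt hfin⟩
  · have hh : Measurable h := measurable_rlIntegralRight H t (by fun_prop)
    filter_upwards [ae_lt_top_of_setLIntegral_mul_sq_lt_top measurableSet_Ioo (by fun_prop)
      (by fun_prop) (fun y₁ hy₁ ↦ by simpa using rpow_pos_of_pos hy₁.1 (-H)) hfin,
      ae_restrict_mem measurableSet_Ioo] with y₁ hlt hy₁
    exact (hgh y₁ hy₁).trans_lt hlt
  · gcongr
    exact hgh y₁ hy₁

/-- the key square-integrability estimate: the function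
`g(y₁) = ∫_{y₁}^t u^H (u−y₁)^{H/2−1} (∫_{y₁}^u (u−y₂)^{H/2−1} y₂^{−H/2} |φ(y₂)| dy₂) du`
is finite a.e. on `(0,t)` and satisfies `∫_0^t y₁^{−H} g(y₁)² dy₁ < ∞`. -/
theorem stmt19 (H t : ℝ) (hH : H ∈ Ioo (1/2 : ℝ) 1) (ht : 0 < t)
    (φ : ℝ → ℝ) (hφ : MemLp φ 2 (volume.restrict (Icc (0:ℝ) t)))
    (g : ℝ → ℝ≥0∞)
    (hg : ∀ y₁, g y₁ = ∫⁻ u in Ioc y₁ t,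
      ENNReal.ofReal (u ^ H * (u - y₁) ^ (H/2 - 1)) *
        ∫⁻ y₂ in Ioc y₁ u,
          ENNReal.ofReal ((u - y₂) ^ (H/2 - 1) * y₂ ^ (-(H/2)) * |φ y₂|)) :
    (∀ᵐ y₁ ∂(volume.restrict (Ioo (0:ℝ) t)), g y₁ < ⊤) ∧
    ∫⁻ y₁ in Ioo (0:ℝ) t, ENNReal.ofReal (y₁ ^ (-H)) * (g y₁) ^ 2 < ⊤ :=
  stmt19_general H t hH φ hφ g hg
end
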